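/- arXiv:math/0203167 — 7 statements merged into one kernel-verified Lean document; each statement's English description precedes it below -/
import Mathlib

section
/- Artin's representation of the braid group is faithful: for every n ≥ 2, the group homomorphism ρ : B_n → Aut(F_n) determined by sending each generator σ_i to the automorphism that maps x_i to x_i x_{i+1} x_i^{-1}, maps x_{i+1} to x_i, and fixes all other free generators, is injective. -/
/-!
Write `B_m` for the braid group on `m + 1` strands acting on `F_{m+1} = ⟨x_0, …, x_m⟩`, and
induct on `m`. Let `T_j = σ_{m-1} ⋯ σ_j` (`descProd`) and let `A_j = T_{j+1} σ_j² T_{j+1}⁻¹`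
(`pureGen`) be the pure braid in which strand `j` encircles the last one. Right multiplication by
the `σ_i` permutes the cosets `H T_j` of `H = P ⊔ L`, where `P = ⟨A_j⟩` and `L = ⟨σ_i | i + 1 < m⟩`,
and `L` normalises `P`; so every braid is `p c T_j` with `p ∈ P` and `c ∈ L`.

The automorphism `ρ(c)` fixes `x_m`, `ρ(p)` conjugates it and `ρ(T_j)` sends `x_j` to a conjugate
of `x_m`, so killing `x_m` shows that a braid `p c T_j` in the kernel has `j = m`. Writing `p` as
the image of a word `v` in the `A_j`, we get `ρ(p) x_m = U⁻¹ x_m U` where `U` becomes `ζ(v)` once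
`x_m` is killed, for an explicit involution `ζ` of `F_m`. If `ρ(p c) = 1`, then `U` commutes with
`x_m`, hence is a power of `x_m`, so `ζ(v) = 1` and `v = 1`. Finally `L` is a copy of `B_{m-1}`
which, read modulo `x_m`, acts on `F_m` by Artin's representation, so `c = 1` by induction.
-/

/-- The defining relations of the braid group on `m + 1` strands (`m` generators
`σ_1, …, σ_m`, indexed here by `Fin m`): the commutation relations
`σ_i σ_j = σ_j σ_i` for `|i - j| > 1` and the braid relations
`σ_i σ_{i+1} σ_i = σ_{i+1} σ_i σ_{i+1}`. -/
def braidRels (m : ℕ) : Set (FreeGroup (Fin m)) :=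
  {r | (∃ i j : Fin m, (i : ℕ) + 1 < (j : ℕ) ∧
        r = FreeGroup.of i * FreeGroup.of j * (FreeGroup.of i)⁻¹ * (FreeGroup.of j)⁻¹) ∨
       (∃ i j : Fin m, (i : ℕ) + 1 = (j : ℕ) ∧
        r = FreeGroup.of i * FreeGroup.of j * FreeGroup.of i *
            (FreeGroup.of j * FreeGroup.of i * FreeGroup.of j)⁻¹)}

/-- The index in `Fin n` of the generator `x_i` of `F_n` acted on by `σ_i`
(the strand index `i`, `0`-based). -/
def xL (n : ℕ) (i : Fin (n - 1)) : Fin n := ⟨i, by have := i.isLt; omega⟩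

/-- The index in `Fin n` of the generator `x_{i+1}` of `F_n` acted on by `σ_i`. -/
def xR (n : ℕ) (i : Fin (n - 1)) : Fin n := ⟨(i : ℕ) + 1, by have := i.isLt; omega⟩

open scoped Pointwise

section GroupLemmas

variable {G : Type*} [Group G] {x y : G}

lemma conj_eq_inv_conj_of_braid (h : x * y * x = y * x * y) : x * y * x⁻¹ = y⁻¹ * x * y := by
  refine mul_left_cancel (a := y) ?_
  calc y * (x * y * x⁻¹) = y * x * y * x⁻¹ := by group
    _ = x * y := by rw [← h]; group
    _ = y * (y⁻¹ * x * y) := by group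

lemma conj_sq_of_braid (h : x * y * x = y * x * y) :
    x * (y * y) * x⁻¹ = y⁻¹ * (x * x) * y := by
  calc x * (y * y) * x⁻¹ = (x * y * x⁻¹) * (x * y * x⁻¹) := by group
    _ = (y⁻¹ * x * y) * (y⁻¹ * x * y) := by rw [conj_eq_inv_conj_of_braid h]
    _ = y⁻¹ * (x * x) * y := by group

lemma conj_conj_sq_of_braid (h : x * y * x = y * x * y) :
    x * (y * (x * x) * y⁻¹) * x⁻¹ = y * y := by
  calc x * (y * (x * x) * y⁻¹) * x⁻¹ = x * y * x * (x * y * x⁻¹)⁻¹ := by group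
    _ = y * x * y * (y⁻¹ * x * y)⁻¹ := by rw [h, conj_eq_inv_conj_of_braid h]
    _ = y * y := by group

lemma conj_conj_of_commute {g t : G} (h : Commute g t) (y : G) :
    g * (t * y * t⁻¹) * g⁻¹ = t * (g * y * g⁻¹) * t⁻¹ := by
  calc g * (t * y * t⁻¹) * g⁻¹ = (g * t) * y * (g * t)⁻¹ := by group
    _ = (t * g) * y * (t * g)⁻¹ := by rw [h.eq]
    _ = t * (g * y * g⁻¹) * t⁻¹ := by group

lemma mem_normalizer_closure {s : Set G} {g : G}
    (h₁ : ∀ a ∈ s, g * a * g⁻¹ ∈ Subgroup.closure s)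
    (h₂ : ∀ a ∈ s, g⁻¹ * a * g ∈ Subgroup.closure s) :
    g ∈ Subgroup.normalizer (Subgroup.closure s : Set G) := by
  have conj_mem : ∀ g : G, (∀ a ∈ s, g * a * g⁻¹ ∈ Subgroup.closure s) →
      ∀ k ∈ Subgroup.closure s, g * k * g⁻¹ ∈ Subgroup.closure s := fun g hg k hk =>
    Subgroup.closure_le (K := (Subgroup.closure s).comap (MulAut.conj g).toMonoidHom)
      |>.2 hg hk
  refine Subgroup.mem_normalizer_iff.2 fun k => ⟨conj_mem g h₁ k, fun hk => ?_⟩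
  simpa [mul_assoc] using conj_mem g⁻¹ (by simpa using h₂) _ hk

end GroupLemmas

/-- The action on `N` induced through a retraction `r` of `i`; the hypothesis `hρ` says that each
`ρ g` preserves the kernel of `r`. -/
noncomputable def MulAut.descend {G M N : Type*} [Group G] [Group M] [Group N]
    (ρ : G →* MulAut M) (i : N →* M) (r : M →* N) (hri : ∀ x, r (i x) = x)
    (hρ : ∀ g w, r (ρ g (i (r w))) = r (ρ g w)) : G →* MulAut N :=
  MonoidHom.mk'
    (fun g =>
      { toFun := fun x => r (ρ g (i x))
        invFun := fun x => r (ρ g⁻¹ (i x))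
        left_inv := fun x => by
          dsimp only
          rw [hρ, map_inv, MulAut.inv_apply_self, hri]
        right_inv := fun x => by
          dsimp only
          rw [hρ, map_inv, MulAut.apply_inv_self, hri]
        map_mul' := by simp })
    fun g h => MulEquiv.ext fun x => by
      simp only [MulEquiv.coe_mk, Equiv.coe_fn_mk, MulAut.mul_apply, hρ, map_mul]

section Centralizer

variable {α : Type*}

open FreeGroup

lemma FreeGroup.mk_singleton_mem_zpowers (t : α) (b : Bool) :
    mk [(t, b)] ∈ Subgroup.zpowers (of t) := by
  cases b
  · have : mk [(t, false)] = (of t)⁻¹ := by rw [of, inv_mk]; rfl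
    rw [this]
    exact inv_mem (Subgroup.mem_zpowers _)
  · exact Subgroup.mem_zpowers _

variable [DecidableEq α]

lemma FreeGroup.toWord_mk_of_isReduced {L : List (α × Bool)} (h : IsReduced L) :
    (mk L).toWord = L := by
  rw [toWord_mk, h.reduce_eq]

lemma FreeGroup.toWord_mul_of_of_ne {x : FreeGroup α} {t c : α} {e : Bool} {L : List (α × Bool)}
    (hx : x.toWord = L ++ [(c, e)]) (hc : c ≠ t) :
    (x * of t).toWord = x.toWord ++ [(t, true)] := by
  rw [toWord_mul, toWord_of]
  refine IsReduced.reduce_eq ?_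
  rw [hx]
  refine IsReduced.append_overlap (hx ▸ isReduced_toWord) ?_ (List.cons_ne_nil _ _)
  simp [isReduced_cons_cons, hc]

lemma FreeGroup.toWord_of_mul_of_ne {x : FreeGroup α} {t a : α} {b : Bool} {L : List (α × Bool)}
    (hx : x.toWord = (a, b) :: L) (ha : a ≠ t) :
    (of t * x).toWord = (t, true) :: x.toWord := by
  rw [toWord_mul, toWord_of]
  refine IsReduced.reduce_eq ?_
  rw [hx]
  refine IsReduced.append_overlap (L₁ := [(t, true)]) (L₂ := [(a, b)]) (L₃ := L) ?_ ?_
    (List.cons_ne_nil _ _)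
  · simp [isReduced_cons_cons, ha.symm]
  · rw [List.singleton_append, ← hx]
    exact isReduced_toWord

theorem FreeGroup.mem_zpowers_of_commute_of {t : α} (x : FreeGroup α) (hx : Commute x (of t)) :
    x ∈ Subgroup.zpowers (of t) := by
  induction hN : x.toWord.length using Nat.strong_induction_on generalizing x with
  | _ N ih =>
  have peel : ∀ y s, s ∈ Subgroup.zpowers (of t) → (x = s * y ∨ x = y * s) →
      y.toWord.length < N → x ∈ Subgroup.zpowers (of t) := by
    intro y s hs hxy hy
    have hst : Commute s (of t) := by
      obtain ⟨k, rfl⟩ := hs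
      exact (Commute.refl _).zpow_left k
    rcases hxy with rfl | rfl
    · exact mul_mem hs (ih _ hy y (by simpa using hst.inv_left.mul_left hx) rfl)
    · exact mul_mem (ih _ hy y (by simpa using hx.mul_left hst.inv_left) rfl) hs
  have hred : IsReduced x.toWord := isReduced_toWord
  have hmk : mk x.toWord = x := mk_toWord
  rcases hw : x.toWord with _ | ⟨⟨a, b⟩, L⟩
  · rw [toWord_eq_nil_iff.1 hw]
    exact one_mem _
  obtain ⟨L', ⟨c, e⟩, hw'⟩ := ((a, b) :: L).eq_nil_or_concat'.resolve_left (List.cons_ne_nil _ _)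
  by_cases ha : a = t
  · subst ha
    refine peel (mk L) _ (mk_singleton_mem_zpowers a b) (.inl ?_) ?_
    · rw [← hmk, hw, mul_mk]; rfl
    · rw [toWord_mk_of_isReduced ((hw ▸ hred).infix ⟨[(a, b)], [], by simp⟩), ← hN, hw]
      simp
  by_cases hc : c = t
  · subst hc
    refine peel (mk L') _ (mk_singleton_mem_zpowers c e) (.inr ?_) ?_
    · rw [← hmk, hw, hw', mul_mk]
    · rw [toWord_mk_of_isReduced (((hw.trans hw') ▸ hred).infix ⟨[], [(c, e)], by simp⟩), ← hN,
        hw, hw']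
      simp
  -- Otherwise `t` cancels on neither side, so `x * t` and `t * x` have distinct reduced words.
  have := congrArg toWord hx.eq
  rw [toWord_mul_of_of_ne (hw.trans hw') hc, toWord_of_mul_of_ne hw ha, hw] at this
  exact absurd (congrArg Prod.fst (List.cons_eq_cons.1 this).1) ha

end Centralizer

namespace Artin

/-! ### Braids -/

/-- The braid group on `m + 1` strands. -/
abbrev BraidGroup (m : ℕ) := PresentedGroup (braidRels m)

/-- The generators indexed by `ℕ`, with the junk value `σ m i = 1` for `i ≥ m`. -/
noncomputable def σ (m i : ℕ) : BraidGroup m :=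
  if h : i < m then PresentedGroup.of ⟨i, h⟩ else 1

variable {m : ℕ}

lemma σ_of_lt {i : ℕ} (h : i < m) : σ m i = PresentedGroup.of ⟨i, h⟩ := dif_pos h

lemma σ_of_le {i : ℕ} (h : m ≤ i) : σ m i = 1 := dif_neg (by omega)

instance : Subsingleton (BraidGroup 0) := by
  refine subsingleton_of_forall_eq 1 fun β => ?_
  have hβ : β ∈ Subgroup.closure (Set.range PresentedGroup.of) := by
    rw [PresentedGroup.closure_range_of]; trivial
  rwa [Set.range_eq_empty, Subgroup.closure_empty, Subgroup.mem_bot] at hβ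

lemma σ_braid {i : ℕ} (h : i + 1 < m) :
    σ m i * σ m (i + 1) * σ m i = σ m (i + 1) * σ m i * σ m (i + 1) := by
  have := PresentedGroup.one_of_mem (rels := braidRels m)
    (Or.inr ⟨⟨i, by omega⟩, ⟨i + 1, h⟩, rfl, rfl⟩)
  simp only [map_mul, map_inv, mul_inv_eq_one] at this
  rwa [σ_of_lt h, σ_of_lt (by omega : i < m)]

lemma σ_commute {i j : ℕ} (h : i + 2 ≤ j) : Commute (σ m i) (σ m j) := by
  rcases lt_or_ge j m with hj | hj
  · have := PresentedGroup.one_of_mem (rels := braidRels m)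
      (Or.inl ⟨⟨i, by omega⟩, ⟨j, hj⟩, by simp only; omega, rfl⟩)
    simp only [map_mul, map_inv, mul_inv_eq_iff_eq_mul] at this
    rwa [σ_of_lt hj, σ_of_lt (by omega : i < m)]
  · rw [σ_of_le hj]
    exact .one_right _

noncomputable def descProd (m j : ℕ) : BraidGroup m :=
  if j < m then descProd m (j + 1) * σ m j else 1
termination_by m - j

lemma descProd_of_le {j : ℕ} (h : m ≤ j) : descProd m j = 1 := by
  rw [descProd, if_neg (by omega)]

lemma descProd_of_lt {j : ℕ} (h : j < m) : descProd m j = descProd m (j + 1) * σ m j := by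
  rw [descProd, if_pos h]

lemma σ_commute_descProd {i j : ℕ} (h : i + 2 ≤ j) : Commute (σ m i) (descProd m j) := by
  rcases lt_or_ge j m with hj | hj
  · rw [descProd_of_lt hj]
    exact (σ_commute_descProd (by omega)).mul_right (σ_commute h)
  · rw [descProd_of_le hj]
    exact .one_right _
termination_by m - j

lemma descProd_mul_σ {i j : ℕ} (h : j ≤ i) (hi : i + 1 < m) :
    descProd m j * σ m (i + 1) = σ m i * descProd m j := by
  rw [descProd_of_lt (by omega : j < m)]
  rcases h.eq_or_lt with rfl | hlt
  · have hc := σ_commute_descProd (m := m) (le_refl (j + 2))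
    rw [descProd_of_lt hi]
    calc descProd m (j + 2) * σ m (j + 1) * σ m j * σ m (j + 1)
        = descProd m (j + 2) * (σ m j * σ m (j + 1) * σ m j) := by rw [σ_braid hi]; group
      _ = σ m j * (descProd m (j + 2) * σ m (j + 1) * σ m j) := by
          rw [← mul_assoc, ← mul_assoc, ← hc.eq]; group
  · calc descProd m (j + 1) * σ m j * σ m (i + 1)
        = descProd m (j + 1) * σ m (i + 1) * σ m j := by
          rw [mul_assoc, (σ_commute (by omega : j + 2 ≤ i + 1)).eq, mul_assoc]
      _ = σ m i * (descProd m (j + 1) * σ m j) := by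
          rw [descProd_mul_σ (by omega : j + 1 ≤ i) hi]; group
termination_by i - j

/-- Artin's pure braid `A_{j,m}`, in which strand `j` encircles the last strand `m`. -/
noncomputable def pureGen (m j : ℕ) : BraidGroup m :=
  descProd m (j + 1) * (σ m j * σ m j) * (descProd m (j + 1))⁻¹

lemma pureGen_eq_of_lt {j : ℕ} (h : j + 1 < m) : pureGen m j =
    descProd m (j + 2) * (σ m (j + 1) * (σ m j * σ m j) * (σ m (j + 1))⁻¹) *
      (descProd m (j + 2))⁻¹ := by
  rw [pureGen, descProd_of_lt h]; group

lemma pureGen_succ (j : ℕ) : pureGen m (j + 1) =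
    descProd m (j + 2) * (σ m (j + 1) * σ m (j + 1)) * (descProd m (j + 2))⁻¹ := rfl

lemma σ_commute_pureGen_of_add_two_le {i j : ℕ} (h : i + 2 ≤ j) : Commute (σ m i) (pureGen m j) :=
  ((σ_commute_descProd (by omega)).mul_right ((σ_commute h).mul_right (σ_commute h))).mul_right
    (σ_commute_descProd (by omega)).inv_right

lemma σ_commute_pureGen_of_lt {i j : ℕ} (h : j < i) (hi : i + 1 < m) :
    Commute (σ m i) (pureGen m j) := by
  have hσ : σ m i = descProd m (j + 1) * σ m (i + 1) * (descProd m (j + 1))⁻¹ :=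
    eq_mul_inv_of_mul_eq (descProd_mul_σ h hi).symm
  rw [hσ, pureGen, Commute.conj_iff]
  have hc := (σ_commute (m := m) (by omega : j + 2 ≤ i + 1)).symm
  exact hc.mul_right hc

lemma σ_conj_pureGen_self {j : ℕ} (h : j + 1 < m) :
    σ m j * pureGen m j * (σ m j)⁻¹ = pureGen m (j + 1) := by
  rw [pureGen_eq_of_lt h, conj_conj_of_commute (σ_commute_descProd le_rfl),
    conj_conj_sq_of_braid (σ_braid h), pureGen_succ]

lemma σ_conj_pureGen_succ {j : ℕ} (h : j + 1 < m) :
    σ m j * pureGen m (j + 1) * (σ m j)⁻¹ =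
      (pureGen m (j + 1))⁻¹ * pureGen m j * pureGen m (j + 1) := by
  rw [pureGen_succ, conj_conj_of_commute (σ_commute_descProd le_rfl),
    conj_sq_of_braid (σ_braid h), pureGen_eq_of_lt h]
  group

def pureSubgroup (m : ℕ) : Subgroup (BraidGroup m) :=
  Subgroup.closure {pureGen m j | (j : ℕ) (_ : j < m)}

def lowerBraids (m : ℕ) : Subgroup (BraidGroup m) :=
  Subgroup.closure {σ m i | (i : ℕ) (_ : i + 1 < m)}

lemma pureGen_mem {j : ℕ} (h : j < m) : pureGen m j ∈ pureSubgroup m :=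
  Subgroup.subset_closure ⟨j, h, rfl⟩

lemma σ_mem_lowerBraids {i : ℕ} (h : i + 1 < m) : σ m i ∈ lowerBraids m :=
  Subgroup.subset_closure ⟨i, h, rfl⟩

noncomputable def pureHom (m : ℕ) : FreeGroup (Fin m) →* BraidGroup m :=
  FreeGroup.lift fun j => pureGen m j

lemma pureHom_of (j : Fin m) : pureHom m (FreeGroup.of j) = pureGen m j :=
  FreeGroup.lift_apply_of

lemma range_pureHom : (pureHom m).range = pureSubgroup m := by
  rw [pureHom, FreeGroup.range_lift_eq_closure, pureSubgroup]
  congr 1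
  ext g
  exact ⟨fun ⟨j, hj⟩ => ⟨j, j.isLt, hj⟩, fun ⟨j, hj, hg⟩ => ⟨⟨j, hj⟩, hg⟩⟩

lemma σ_conj_pureGen_mem {i j : ℕ} (hi : i + 1 < m) (hj : j < m) :
    σ m i * pureGen m j * (σ m i)⁻¹ ∈ pureSubgroup m := by
  rcases lt_trichotomy j i with hlt | rfl | hgt
  · rw [(σ_commute_pureGen_of_lt hlt hi).eq, mul_inv_cancel_right]
    exact pureGen_mem hj
  · rw [σ_conj_pureGen_self hi]
    exact pureGen_mem hi
  · obtain rfl | hgt := (Nat.succ_le_of_lt hgt).eq_or_lt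
    · rw [σ_conj_pureGen_succ hi]
      exact mul_mem (mul_mem (inv_mem (pureGen_mem hi)) (pureGen_mem (by omega))) (pureGen_mem hi)
    · rw [(σ_commute_pureGen_of_add_two_le hgt).eq, mul_inv_cancel_right]
      exact pureGen_mem hj

lemma σ_inv_conj_pureGen_mem {i j : ℕ} (hi : i + 1 < m) (hj : j < m) :
    (σ m i)⁻¹ * pureGen m j * σ m i ∈ pureSubgroup m := by
  rcases lt_trichotomy j i with hlt | rfl | hgt
  · rw [(σ_commute_pureGen_of_lt hlt hi).inv_left.eq, inv_mul_cancel_right]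
    exact pureGen_mem hj
  · have h : σ m j * (pureGen m j * pureGen m (j + 1) * (pureGen m j)⁻¹) * (σ m j)⁻¹ =
        pureGen m j := by
      calc _ = (σ m j * pureGen m j * (σ m j)⁻¹) * (σ m j * pureGen m (j + 1) * (σ m j)⁻¹) *
            (σ m j * pureGen m j * (σ m j)⁻¹)⁻¹ := by group
        _ = pureGen m j := by rw [σ_conj_pureGen_self hi, σ_conj_pureGen_succ hi]; group
    have h' : (σ m j)⁻¹ * pureGen m j * σ m j =
        pureGen m j * pureGen m (j + 1) * (pureGen m j)⁻¹ := by
      conv_lhs => rw [← h]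
      group
    rw [h']
    exact mul_mem (mul_mem (pureGen_mem hj) (pureGen_mem hi)) (inv_mem (pureGen_mem hj))
  · obtain rfl | hgt := (Nat.succ_le_of_lt hgt).eq_or_lt
    · have h : (σ m i)⁻¹ * pureGen m (i + 1) * σ m i = pureGen m i := by
        rw [← σ_conj_pureGen_self hi]; group
      rw [h]
      exact pureGen_mem (by omega)
    · rw [(σ_commute_pureGen_of_add_two_le hgt).inv_left.eq, inv_mul_cancel_right]
      exact pureGen_mem hj

lemma lowerBraids_le_normalizer :
    lowerBraids m ≤ Subgroup.normalizer (pureSubgroup m : Set (BraidGroup m)) := by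
  refine Subgroup.closure_le _ |>.2 ?_
  rintro _ ⟨i, hi, rfl⟩
  refine mem_normalizer_closure ?_ ?_ <;> rintro _ ⟨j, hj, rfl⟩
  · exact σ_conj_pureGen_mem hi hj
  · exact σ_inv_conj_pureGen_mem hi hj

lemma coe_pureSubgroup_sup_lowerBraids :
    ((pureSubgroup m ⊔ lowerBraids m : Subgroup (BraidGroup m)) : Set (BraidGroup m)) =
      (pureSubgroup m : Set (BraidGroup m)) * (lowerBraids m : Set (BraidGroup m)) :=
  Subgroup.coe_mul_of_right_le_normalizer_left _ _ lowerBraids_le_normalizer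

lemma swap_succ_le {i j : ℕ} (hi : i < m) (hj : j ≤ m) : Equiv.swap i (i + 1) j ≤ m := by
  rw [Equiv.swap_apply_def]
  split_ifs <;> omega

lemma descProd_mul_σ_mem {i j : ℕ} (hi : i < m) (hj : j ≤ m) :
    ∃ h ∈ pureSubgroup m ⊔ lowerBraids m,
      descProd m j * σ m i = h * descProd m (Equiv.swap i (i + 1) j) := by
  rcases lt_trichotomy j i with hlt | rfl | hgt
  · obtain ⟨k, rfl⟩ : ∃ k, i = k + 1 := ⟨i - 1, by omega⟩
    rw [Equiv.swap_apply_of_ne_of_ne (by omega) (by omega)]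
    exact ⟨σ m k, Subgroup.mem_sup_right (σ_mem_lowerBraids hi), descProd_mul_σ (by omega) hi⟩
  · refine ⟨pureGen m j, Subgroup.mem_sup_left (pureGen_mem hi), ?_⟩
    rw [Equiv.swap_apply_left, pureGen, descProd_of_lt hi]
    group
  · obtain rfl | hgt := (Nat.succ_le_of_lt hgt).eq_or_lt
    · refine ⟨1, one_mem _, ?_⟩
      rw [Equiv.swap_apply_right, one_mul, descProd_of_lt hi]
    · rw [Equiv.swap_apply_of_ne_of_ne (by omega) (by omega)]
      exact ⟨σ m i, Subgroup.mem_sup_right (σ_mem_lowerBraids (by omega)),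
        (σ_commute_descProd hgt).eq.symm⟩

lemma exists_eq_mul_descProd (β : BraidGroup m) :
    ∃ h ∈ pureSubgroup m ⊔ lowerBraids m, ∃ j ≤ m, β = h * descProd m j := by
  have hβ : β ∈ Subgroup.closure (Set.range PresentedGroup.of) := by
    rw [PresentedGroup.closure_range_of]; trivial
  induction hβ using Subgroup.closure_induction_right with
  | one => exact ⟨1, one_mem _, m, le_rfl, by rw [descProd_of_le le_rfl, mul_one]⟩
  | mul_right _ _ _ hi ih =>
    obtain ⟨i, rfl⟩ := hi
    obtain ⟨h, hh, j, hj, rfl⟩ := ih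
    obtain ⟨h', hh', e⟩ := descProd_mul_σ_mem i.isLt hj
    rw [σ_of_lt i.isLt] at e
    exact ⟨h * h', mul_mem hh hh', _, swap_succ_le i.isLt hj, by rw [mul_assoc, e, mul_assoc]⟩
  | mul_inv_cancel _ _ _ hi ih =>
    obtain ⟨i, rfl⟩ := hi
    obtain ⟨h, hh, j, hj, rfl⟩ := ih
    obtain ⟨h', hh', e⟩ := descProd_mul_σ_mem i.isLt (swap_succ_le i.isLt hj)
    rw [σ_of_lt i.isLt, Equiv.swap_apply_self] at e
    refine ⟨h * h'⁻¹, mul_mem hh (inv_mem hh'), _, swap_succ_le i.isLt hj, ?_⟩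
    rw [mul_assoc, ← inv_mul_eq_iff_eq_mul.2 e.symm]
    group

/-! ### Words in the free group -/

/-- The free generators indexed by `ℕ`, with the junk value `X n k = 1` for `k ≥ n`. -/
noncomputable def X (n k : ℕ) : FreeGroup (Fin n) :=
  if h : k < n then FreeGroup.of ⟨k, h⟩ else 1

variable {n : ℕ}

lemma X_of_lt {k : ℕ} (h : k < n) : X n k = FreeGroup.of ⟨k, h⟩ := dif_pos h

lemma X_of_le {k : ℕ} (h : n ≤ k) : X n k = 1 := dif_neg (by omega)

lemma X_ne_one {k : ℕ} (h : k < n) : X n k ≠ 1 := by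
  rw [X_of_lt h]
  exact FreeGroup.of_ne_one _

noncomputable def XProd (n a b : ℕ) : FreeGroup (Fin n) :=
  ((List.range' a (b - a)).map (X n)).prod

lemma XProd_of_le {a b : ℕ} (h : b ≤ a) : XProd n a b = 1 := by
  simp [XProd, Nat.sub_eq_zero_of_le h]

lemma XProd_of_lt {a b : ℕ} (h : a < b) : XProd n a b = X n a * XProd n (a + 1) b := by
  rw [XProd, XProd, show b - a = b - (a + 1) + 1 by omega, List.range'_succ, List.map_cons,
    List.prod_cons]

noncomputable def killTop (n : ℕ) : FreeGroup (Fin (n + 1)) →* FreeGroup (Fin n) :=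
  FreeGroup.lift fun k => X n k

lemma killTop_X (k : ℕ) : killTop n (X (n + 1) k) = X n k := by
  rcases lt_or_ge k (n + 1) with h | h
  · rw [X_of_lt h, killTop, FreeGroup.lift_apply_of]
  · rw [X_of_le h, X_of_le (by omega), map_one]

lemma killTop_XProd (a b : ℕ) : killTop n (XProd (n + 1) a b) = XProd n a b := by
  simp only [XProd, map_list_prod, List.map_map]
  congr 1
  exact List.map_congr_left fun k _ => killTop_X k

noncomputable def zeta (n : ℕ) : FreeGroup (Fin n) →* FreeGroup (Fin n) :=
  FreeGroup.lift fun j => (XProd n (j + 1) n)⁻¹ * (X n j)⁻¹ * XProd n (j + 1) n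

lemma zeta_X {j : ℕ} (h : j < n) :
    zeta n (X n j) = (XProd n (j + 1) n)⁻¹ * (X n j)⁻¹ * XProd n (j + 1) n := by
  rw [X_of_lt h, zeta, FreeGroup.lift_apply_of, ← X_of_lt h]

lemma zeta_XProd (a : ℕ) : zeta n (XProd n a n) = (XProd n a n)⁻¹ := by
  rcases lt_or_ge a n with h | h
  · rw [XProd_of_lt h, map_mul, zeta_X h, zeta_XProd (a + 1)]
    group
  · rw [XProd_of_le h, map_one, inv_one]
termination_by n - a

lemma zeta_involutive : Function.Involutive (zeta n) := by
  suffices (zeta n).comp (zeta n) = MonoidHom.id _ from fun v => DFunLike.congr_fun this v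
  refine FreeGroup.ext_hom _ _ fun j => ?_
  rw [MonoidHom.comp_apply, MonoidHom.id_apply, ← X_of_lt j.isLt]
  simp only [zeta_X j.isLt, map_mul, map_inv, zeta_XProd]
  group

/-! ### Artin's action -/

structure IsArtin (m : ℕ) (ρ : BraidGroup m →* MulAut (FreeGroup (Fin (m + 1)))) : Prop where
  σ_self : ∀ i < m, ρ (σ m i) (X (m + 1) i) = X (m + 1) i * X (m + 1) (i + 1) * (X (m + 1) i)⁻¹
  σ_succ : ∀ i < m, ρ (σ m i) (X (m + 1) (i + 1)) = X (m + 1) i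
  σ_of_ne : ∀ i < m, ∀ k, k ≠ i → k ≠ i + 1 → ρ (σ m i) (X (m + 1) k) = X (m + 1) k

namespace IsArtin

variable {ρ : BraidGroup m →* MulAut (FreeGroup (Fin (m + 1)))}

lemma apply_σ_X_of_ne (hρ : IsArtin m ρ) {i k : ℕ} (h₁ : k ≠ i) (h₂ : k ≠ i + 1) :
    ρ (σ m i) (X (m + 1) k) = X (m + 1) k := by
  rcases lt_or_ge i m with hi | hi
  · exact hρ.σ_of_ne i hi k h₁ h₂
  · rw [σ_of_le hi, map_one, MulAut.one_apply]

lemma apply_σ_XProd (hρ : IsArtin m ρ) {i c b : ℕ} (h : i + 2 ≤ c) :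
    ρ (σ m i) (XProd (m + 1) c b) = XProd (m + 1) c b := by
  rcases lt_or_ge c b with hc | hc
  · rw [XProd_of_lt hc, map_mul, hρ.apply_σ_X_of_ne (by omega) (by omega),
      hρ.apply_σ_XProd (by omega : i + 2 ≤ c + 1)]
  · rw [XProd_of_le hc, map_one]
termination_by b - c

lemma apply_descProd_X_of_lt (hρ : IsArtin m ρ) {j k : ℕ} (h : k < j) :
    ρ (descProd m j) (X (m + 1) k) = X (m + 1) k := by
  rcases lt_or_ge j m with hj | hj
  · rw [descProd_of_lt hj, map_mul, MulAut.mul_apply, hρ.apply_σ_X_of_ne (by omega) (by omega),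
      hρ.apply_descProd_X_of_lt (by omega)]
  · rw [descProd_of_le hj, map_one, MulAut.one_apply]
termination_by m - j

lemma apply_descProd_X_succ (hρ : IsArtin m ρ) {j k : ℕ} (h₁ : j ≤ k) (h₂ : k < m) :
    ρ (descProd m j) (X (m + 1) (k + 1)) = X (m + 1) k := by
  rw [descProd_of_lt (by omega : j < m), map_mul, MulAut.mul_apply]
  rcases h₁.eq_or_lt with rfl | hlt
  · rw [hρ.σ_succ j h₂, hρ.apply_descProd_X_of_lt (by omega)]
  · rw [hρ.apply_σ_X_of_ne (by omega) (by omega), hρ.apply_descProd_X_succ (by omega) h₂]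
termination_by m - j

lemma apply_descProd_X_self (hρ : IsArtin m ρ) {j : ℕ} (h : j ≤ m) :
    ρ (descProd m j) (X (m + 1) j) = XProd (m + 1) j m * X (m + 1) m * (XProd (m + 1) j m)⁻¹ := by
  rcases h.lt_or_eq with hlt | rfl
  · rw [descProd_of_lt hlt, map_mul, MulAut.mul_apply, hρ.σ_self j hlt, map_mul, map_mul, map_inv,
      hρ.apply_descProd_X_of_lt (by omega), hρ.apply_descProd_X_self (by omega : j + 1 ≤ m),
      XProd_of_lt hlt]
    group
  · rw [descProd_of_le le_rfl, XProd_of_le le_rfl, map_one, MulAut.one_apply]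
    group
termination_by m - j

lemma apply_descProd_XProd (hρ : IsArtin m ρ) {j c : ℕ} (h : j ≤ c) :
    ρ (descProd m j) (XProd (m + 1) (c + 1) (m + 1)) = XProd (m + 1) c m := by
  rcases lt_or_ge c m with hc | hc
  · rw [XProd_of_lt (by omega), map_mul, hρ.apply_descProd_X_succ h hc,
      hρ.apply_descProd_XProd (by omega : j ≤ c + 1), XProd_of_lt hc]
  · rw [XProd_of_le (by omega), XProd_of_le hc, map_one]
termination_by m - c

lemma apply_pureGen (j : ℕ) (w : FreeGroup (Fin (m + 1))) :
    ρ (pureGen m j) (ρ (descProd m (j + 1)) w) =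
      ρ (descProd m (j + 1)) (ρ (σ m j) (ρ (σ m j) w)) := by
  simp only [← MulAut.mul_apply, ← map_mul]
  congr 2
  rw [pureGen]
  group

lemma apply_pureGen_X_top (hρ : IsArtin m ρ) {j : ℕ} (hj : j < m) :
    ρ (pureGen m j) (X (m + 1) m) =
      ((XProd (m + 1) (j + 1) m)⁻¹ * (X (m + 1) j)⁻¹ * XProd (m + 1) (j + 1) m)⁻¹ * X (m + 1) m *
        ((XProd (m + 1) (j + 1) m)⁻¹ * (X (m + 1) j)⁻¹ * XProd (m + 1) (j + 1) m) := by
  set P := XProd (m + 1) (j + 2) (m + 1)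
  have hP : ρ (σ m j) P = P := hρ.apply_σ_XProd le_rfl
  have hTP : ρ (descProd m (j + 1)) P = XProd (m + 1) (j + 1) m := hρ.apply_descProd_XProd le_rfl
  have hw : ρ (descProd m (j + 1)) (P⁻¹ * X (m + 1) (j + 1) * P) = X (m + 1) m := by
    rw [map_mul, map_mul, map_inv, hTP, hρ.apply_descProd_X_self hj]
    group
  rw [← hw, apply_pureGen]
  simp only [map_mul, map_inv, hP, hTP, hρ.σ_succ j hj, hρ.σ_self j hj,
    hρ.apply_descProd_X_of_lt (Nat.lt_succ_self j),
    hρ.apply_descProd_X_self hj]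
  group

lemma apply_pureGen_X_of_ne (hρ : IsArtin m ρ) {j k : ℕ} (h₁ : k ≠ j) (h₂ : k ≠ m) :
    ρ (pureGen m j) (X (m + 1) k) = X (m + 1) k := by
  rcases lt_or_ge k j with hkj | hkj
  · conv_lhs => rw [← hρ.apply_descProd_X_of_lt (by omega : k < j + 1)]
    rw [apply_pureGen, hρ.apply_σ_X_of_ne (by omega) (by omega),
      hρ.apply_σ_X_of_ne (by omega) (by omega), hρ.apply_descProd_X_of_lt (by omega)]
  rcases lt_or_ge k m with hkm | hkm
  · conv_lhs => rw [← hρ.apply_descProd_X_succ (by omega : j + 1 ≤ k) hkm]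
    rw [apply_pureGen, hρ.apply_σ_X_of_ne (by omega) (by omega),
      hρ.apply_σ_X_of_ne (by omega) (by omega), hρ.apply_descProd_X_succ (by omega) hkm]
  · rw [X_of_le (by omega), map_one]

lemma apply_pureGen_X_self (hρ : IsArtin m ρ) {j : ℕ} (hj : j < m) :
    ρ (pureGen m j) (X (m + 1) j) =
      (X (m + 1) j * (XProd (m + 1) (j + 1) m * X (m + 1) m * (XProd (m + 1) (j + 1) m)⁻¹) *
        (X (m + 1) j)⁻¹) * X (m + 1) j *
      (X (m + 1) j * (XProd (m + 1) (j + 1) m * X (m + 1) m * (XProd (m + 1) (j + 1) m)⁻¹) *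
        (X (m + 1) j)⁻¹)⁻¹ := by
  conv_lhs => rw [← hρ.apply_descProd_X_of_lt (Nat.lt_succ_self j)]
  rw [apply_pureGen, hρ.σ_self j hj]
  simp only [map_mul, map_inv, hρ.σ_self j hj, hρ.σ_succ j hj,
    hρ.apply_descProd_X_of_lt (Nat.lt_succ_self j), hρ.apply_descProd_X_self hj]

lemma killTop_apply_pureGen (hρ : IsArtin m ρ) {j : ℕ} (hj : j < m) (w : FreeGroup (Fin (m + 1))) :
    killTop m (ρ (pureGen m j) w) = killTop m w := by
  suffices (killTop m).comp (ρ (pureGen m j)).toMonoidHom = killTop m from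
    DFunLike.congr_fun this w
  refine FreeGroup.ext_hom _ _ fun k => ?_
  rw [MonoidHom.comp_apply, MulEquiv.coe_toMonoidHom, ← X_of_lt k.isLt]
  by_cases hkj : (k : ℕ) = j
  · rw [hkj, hρ.apply_pureGen_X_self hj]
    simp only [map_mul, map_inv, killTop_X, killTop_XProd, X_of_le (le_refl m)]
    group
  by_cases hkm : (k : ℕ) = m
  · rw [hkm, hρ.apply_pureGen_X_top hj]
    simp only [map_mul, map_inv, killTop_X, X_of_le (le_refl m)]
    group
  · rw [hρ.apply_pureGen_X_of_ne hkj hkm]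

lemma killTop_apply_pureHom (hρ : IsArtin m ρ) (v : FreeGroup (Fin m))
    (w : FreeGroup (Fin (m + 1))) : killTop m (ρ (pureHom m v) w) = killTop m w := by
  induction v using FreeGroup.induction_on generalizing w with
  | C1 => rw [map_one, map_one, MulAut.one_apply]
  | of j => rw [pureHom_of, hρ.killTop_apply_pureGen j.isLt]
  | inv_of j ih =>
    rw [← ih, map_inv, map_inv, MulAut.apply_inv_self]
  | mul v₁ v₂ ih₁ ih₂ => rw [map_mul, map_mul, MulAut.mul_apply, ih₁, ih₂]

lemma exists_apply_pureHom_X_top (hρ : IsArtin m ρ) (v : FreeGroup (Fin m)) :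
    ∃ U, ρ (pureHom m v) (X (m + 1) m) = U⁻¹ * X (m + 1) m * U ∧ killTop m U = zeta m v := by
  induction v using FreeGroup.induction_on with
  | C1 => exact ⟨1, by rw [map_one, map_one, MulAut.one_apply]; group, by rw [map_one, map_one]⟩
  | of j =>
    refine ⟨_, by rw [pureHom_of, hρ.apply_pureGen_X_top j.isLt], ?_⟩
    rw [← X_of_lt j.isLt, zeta_X j.isLt]
    simp only [map_mul, map_inv, killTop_X, killTop_XProd]
  | inv_of j ih =>
    obtain ⟨U, hU, hκ⟩ := ih
    refine ⟨(ρ (pureHom m (FreeGroup.of j)⁻¹) U)⁻¹, ?_, ?_⟩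
    · simp only [map_inv]
      conv_rhs => rw [← MulAut.inv_apply_self _ (ρ (pureHom m (FreeGroup.of j))) (X (m + 1) m), hU]
      simp only [map_mul, map_inv]
      group
    · rw [map_inv, hρ.killTop_apply_pureHom, hκ, map_inv]
  | mul v₁ v₂ ih₁ ih₂ =>
    obtain ⟨U₁, hU₁, hκ₁⟩ := ih₁
    obtain ⟨U₂, hU₂, hκ₂⟩ := ih₂
    refine ⟨U₁ * ρ (pureHom m v₁) U₂, ?_, ?_⟩
    · rw [map_mul, map_mul, MulAut.mul_apply, hU₂]
      simp only [map_mul, map_inv, hU₁]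
      group
    · rw [map_mul, hρ.killTop_apply_pureHom, hκ₁, hκ₂, map_mul]

lemma eq_one_of_apply_pureHom_X_top (hρ : IsArtin m ρ) {v : FreeGroup (Fin m)}
    (h : ρ (pureHom m v) (X (m + 1) m) = X (m + 1) m) : v = 1 := by
  obtain ⟨U, hU, hκ⟩ := hρ.exists_apply_pureHom_X_top v
  have hcomm : Commute U (X (m + 1) m) := by
    rw [h] at hU
    calc U * X (m + 1) m = U * (U⁻¹ * X (m + 1) m * U) := by rw [← hU]
      _ = X (m + 1) m * U := by group
  rw [X_of_lt (Nat.lt_succ_self m)] at hcomm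
  obtain ⟨k, rfl⟩ := FreeGroup.mem_zpowers_of_commute_of U hcomm
  apply zeta_involutive.injective
  rw [← hκ, map_zpow, ← X_of_lt (Nat.lt_succ_self m), killTop_X, X_of_le le_rfl, one_zpow,
    map_one]

lemma apply_X_top_of_mem_lowerBraids (hρ : IsArtin m ρ) {c : BraidGroup m}
    (hc : c ∈ lowerBraids m) : ρ c (X (m + 1) m) = X (m + 1) m := by
  suffices lowerBraids m ≤
      (MulAction.stabilizer (MulAut (FreeGroup (Fin (m + 1)))) (X (m + 1) m)).comap ρ from this hc
  refine Subgroup.closure_le _ |>.2 ?_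
  rintro _ ⟨i, hi, rfl⟩
  exact hρ.apply_σ_X_of_ne (by omega) (by omega)

lemma exists_eq_pureHom_mul_of_mem_sup {g : BraidGroup m}
    (hg : g ∈ pureSubgroup m ⊔ lowerBraids m) :
    ∃ v, ∃ c ∈ lowerBraids m, g = pureHom m v * c := by
  rw [← SetLike.mem_coe, coe_pureSubgroup_sup_lowerBraids, Set.mem_mul] at hg
  obtain ⟨p, hp, c, hc, rfl⟩ := hg
  obtain ⟨v, rfl⟩ := range_pureHom (m := m) ▸ hp
  exact ⟨v, c, hc, rfl⟩

lemma isConj_apply_X_top (hρ : IsArtin m ρ) {g : BraidGroup m}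
    (hg : g ∈ pureSubgroup m ⊔ lowerBraids m) : IsConj (X (m + 1) m) (ρ g (X (m + 1) m)) := by
  obtain ⟨v, c, hc, rfl⟩ := exists_eq_pureHom_mul_of_mem_sup hg
  obtain ⟨U, hU, -⟩ := hρ.exists_apply_pureHom_X_top v
  rw [map_mul, MulAut.mul_apply, hρ.apply_X_top_of_mem_lowerBraids hc, hU]
  exact isConj_iff.2 ⟨U⁻¹, by group⟩

/-- The coset is detected because `ρ (descProd m j)` sends `x_j` to a conjugate of `x_m`. -/
lemma mem_sup_of_apply_eq_one (hρ : IsArtin m ρ) {β : BraidGroup m} (h : ρ β = 1) :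
    β ∈ pureSubgroup m ⊔ lowerBraids m := by
  obtain ⟨g, hg, j, hj, rfl⟩ := exists_eq_mul_descProd β
  obtain rfl | hlt := hj.eq_or_lt
  · rwa [descProd_of_le le_rfl, mul_one]
  have hfix : ρ (g * descProd m j) (X (m + 1) j) = X (m + 1) j := by rw [h, MulAut.one_apply]
  rw [map_mul, MulAut.mul_apply, hρ.apply_descProd_X_self hj] at hfix
  have hconj : IsConj (X (m + 1) m) (X (m + 1) j) := by
    refine (hρ.isConj_apply_X_top hg).trans (hfix ▸ isConj_iff.2 ⟨ρ g (XProd (m + 1) j m), ?_⟩)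
    simp only [map_mul, map_inv]
  have := (killTop m).map_isConj hconj
  rw [killTop_X, killTop_X, X_of_le le_rfl, isConj_one_right] at this
  exact absurd this (X_ne_one hlt)

end IsArtin

/-! ### Restriction to the first `m` strands -/

lemma lift_σ_eq_one_of_mem_braidRels {r : FreeGroup (Fin m)} (hr : r ∈ braidRels m) :
    FreeGroup.lift (fun i : Fin m => σ (m + 1) i) r = 1 := by
  rcases hr with ⟨i, j, hij, rfl⟩ | ⟨i, j, hij, rfl⟩
  · simp only [map_mul, map_inv, FreeGroup.lift_apply_of, mul_inv_eq_iff_eq_mul, one_mul]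
    exact (σ_commute (m := m + 1) (i := i) (j := j) (by omega)).eq
  · simp only [map_mul, map_inv, FreeGroup.lift_apply_of, mul_inv_eq_one, ← hij]
    exact σ_braid (by omega)

noncomputable def incl (m : ℕ) : BraidGroup m →* BraidGroup (m + 1) :=
  PresentedGroup.toGroup fun _ => lift_σ_eq_one_of_mem_braidRels

lemma incl_σ {i : ℕ} (hi : i < m) : incl m (σ m i) = σ (m + 1) i := by
  rw [σ_of_lt hi, incl, PresentedGroup.toGroup.of]

lemma range_incl : (incl m).range = lowerBraids (m + 1) := by
  rw [MonoidHom.range_eq_map, ← PresentedGroup.closure_range_of, MonoidHom.map_closure, lowerBraids,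
    ← Set.range_comp]
  congr 1
  ext g
  refine ⟨fun ⟨i, hi⟩ => ⟨i, by omega, ?_⟩, fun ⟨i, hi, hg⟩ => ⟨⟨i, by omega⟩, ?_⟩⟩
  · rw [← hi, Function.comp_apply, ← σ_of_lt i.isLt, incl_σ i.isLt]
  · rw [← hg, Function.comp_apply, ← σ_of_lt (by omega : i < m), incl_σ (by omega)]

noncomputable def inclF (m : ℕ) : FreeGroup (Fin (m + 1)) →* FreeGroup (Fin (m + 2)) :=
  FreeGroup.map Fin.castSucc

lemma inclF_X {k : ℕ} (hk : k < m + 1) : inclF m (X (m + 1) k) = X (m + 2) k := by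
  rw [X_of_lt hk, X_of_lt (by omega), inclF, FreeGroup.map.of]
  rfl

lemma killTop_inclF (w : FreeGroup (Fin (m + 1))) : killTop (m + 1) (inclF m w) = w := by
  suffices (killTop (m + 1)).comp (inclF m) = MonoidHom.id _ from DFunLike.congr_fun this w
  refine FreeGroup.ext_hom _ _ fun k => ?_
  rw [MonoidHom.comp_apply, ← X_of_lt k.isLt, inclF_X k.isLt, killTop_X]
  rfl

namespace IsArtin

variable {ρ : BraidGroup (m + 1) →* MulAut (FreeGroup (Fin (m + 2)))}

lemma killTop_apply_incl_inclF_killTop (hρ : IsArtin (m + 1) ρ) (γ : BraidGroup m)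
    (w : FreeGroup (Fin (m + 2))) :
    killTop (m + 1) (ρ (incl m γ) (inclF m (killTop (m + 1) w))) =
      killTop (m + 1) (ρ (incl m γ) w) := by
  have hfix := hρ.apply_X_top_of_mem_lowerBraids (range_incl ▸ ⟨γ, rfl⟩ : incl m γ ∈ _)
  suffices ((killTop (m + 1)).comp (ρ (incl m γ)).toMonoidHom).comp
      ((inclF m).comp (killTop (m + 1))) = (killTop (m + 1)).comp (ρ (incl m γ)).toMonoidHom from
    DFunLike.congr_fun this w
  refine FreeGroup.ext_hom _ _ fun k => ?_
  simp only [MonoidHom.comp_apply, MulEquiv.coe_toMonoidHom, ← X_of_lt k.isLt, killTop_X]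
  rcases (Nat.lt_succ_iff.1 k.isLt).lt_or_eq with hk | hk
  · rw [inclF_X hk]
  · rw [hk, X_of_le le_rfl, map_one, map_one, map_one, hfix, killTop_X, X_of_le le_rfl]

/-- The action of `B_m ⊆ B_{m+1}` on `F_{m+2}`, read modulo the last generator. -/
noncomputable def restrict (hρ : IsArtin (m + 1) ρ) :
    BraidGroup m →* MulAut (FreeGroup (Fin (m + 1))) :=
  MulAut.descend (ρ.comp (incl m)) (inclF m) (killTop (m + 1)) killTop_inclF
    hρ.killTop_apply_incl_inclF_killTop

lemma restrict_apply (hρ : IsArtin (m + 1) ρ) (γ : BraidGroup m) (w : FreeGroup (Fin (m + 1))) :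
    hρ.restrict γ w = killTop (m + 1) (ρ (incl m γ) (inclF m w)) := rfl

lemma isArtin_restrict (hρ : IsArtin (m + 1) ρ) : IsArtin m hρ.restrict := by
  refine ⟨fun i hi => ?_, fun i hi => ?_, fun i hi k h₁ h₂ => ?_⟩
  · rw [restrict_apply, incl_σ hi, inclF_X (by omega), hρ.σ_self i (by omega)]
    simp only [map_mul, map_inv, killTop_X]
  · rw [restrict_apply, incl_σ hi, inclF_X (by omega), hρ.σ_succ i (by omega), killTop_X]
  · rcases lt_or_ge k (m + 1) with hk | hk
    · rw [restrict_apply, incl_σ hi, inclF_X hk, hρ.σ_of_ne i (by omega) k h₁ h₂, killTop_X]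
    · rw [X_of_le hk, map_one]

theorem injective : ∀ {m : ℕ} {ρ : BraidGroup m →* MulAut (FreeGroup (Fin (m + 1)))},
    IsArtin m ρ → Function.Injective ρ
  | 0, _, _ => fun β₁ β₂ _ => Subsingleton.elim β₁ β₂
  | m + 1, ρ, hρ => by
    refine (injective_iff_map_eq_one ρ).2 fun β hβ => ?_
    obtain ⟨v, c, hc, rfl⟩ := exists_eq_pureHom_mul_of_mem_sup (hρ.mem_sup_of_apply_eq_one hβ)
    have hv : v = 1 := hρ.eq_one_of_apply_pureHom_X_top <| by
      simpa [hρ.apply_X_top_of_mem_lowerBraids hc] using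
        DFunLike.congr_fun hβ (X (m + 2) (m + 1))
    obtain ⟨γ, rfl⟩ := range_incl (m := m) ▸ hc
    rw [hv, map_one, one_mul] at hβ ⊢
    have hγ : hρ.restrict γ = 1 := by
      ext w
      simp only [restrict_apply, hβ, MulAut.one_apply, killTop_inclF]
    rw [hρ.isArtin_restrict.injective (hγ.trans (map_one _).symm), map_one]

end IsArtin

lemma isArtin_of_forall {ρ : BraidGroup m →* MulAut (FreeGroup (Fin (m + 1)))}
    (hρ : ∀ i : Fin m,
      ρ (PresentedGroup.of i) (FreeGroup.of (xL (m + 1) i)) =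
          FreeGroup.of (xL (m + 1) i) * FreeGroup.of (xR (m + 1) i) *
            (FreeGroup.of (xL (m + 1) i))⁻¹ ∧
      ρ (PresentedGroup.of i) (FreeGroup.of (xR (m + 1) i)) = FreeGroup.of (xL (m + 1) i) ∧
      ∀ j : Fin (m + 1), j ≠ xL (m + 1) i → j ≠ xR (m + 1) i →
        ρ (PresentedGroup.of i) (FreeGroup.of j) = FreeGroup.of j) :
    IsArtin m ρ := by
  have hL (i : Fin m) : FreeGroup.of (xL (m + 1) i) = X (m + 1) i := (X_of_lt _).symm
  have hR (i : Fin m) : FreeGroup.of (xR (m + 1) i) = X (m + 1) (i + 1) := (X_of_lt _).symm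
  refine ⟨fun i hi => ?_, fun i hi => ?_, fun i hi k h₁ h₂ => ?_⟩
  · simpa only [hL, hR, ← σ_of_lt hi] using (hρ ⟨i, hi⟩).1
  · simpa only [hL, hR, ← σ_of_lt hi] using (hρ ⟨i, hi⟩).2.1
  · rcases lt_or_ge k (m + 1) with hk | hk
    · simpa only [← X_of_lt hk, ← σ_of_lt hi] using (hρ ⟨i, hi⟩).2.2 ⟨k, hk⟩
        (fun h => h₁ (congrArg Fin.val h)) (fun h => h₂ (congrArg Fin.val h))
    · rw [X_of_le hk, map_one]

end Artin

theorem artin_representation_faithful_general (n : ℕ)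
    (ρ : PresentedGroup (braidRels (n - 1)) →* MulAut (FreeGroup (Fin n)))
    (hρ : ∀ i : Fin (n - 1),
      (ρ (PresentedGroup.of i)) (FreeGroup.of (xL n i)) =
          FreeGroup.of (xL n i) * FreeGroup.of (xR n i) * (FreeGroup.of (xL n i))⁻¹ ∧
      (ρ (PresentedGroup.of i)) (FreeGroup.of (xR n i)) = FreeGroup.of (xL n i) ∧
      ∀ j : Fin n, j ≠ xL n i → j ≠ xR n i →
        (ρ (PresentedGroup.of i)) (FreeGroup.of j) = FreeGroup.of j) :
    Function.Injective ρ := by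
  cases n with
  | zero => exact fun β₁ β₂ _ => Subsingleton.elim (α := Artin.BraidGroup 0) β₁ β₂
  | succ m => exact (Artin.isArtin_of_forall hρ).injective

/-- **Artin's representation is faithful.** For every `n ≥ 2`, any group homomorphism
`ρ : B_n → Aut(F_n)` sending each braid generator `σ_i` to the automorphism with
`x_i ↦ x_i x_{i+1} x_i⁻¹`, `x_{i+1} ↦ x_i`, fixing all other free generators,
is injective. -/
theorem artin_representation_faithful (n : ℕ) (hn : 2 ≤ n)
    (ρ : PresentedGroup (braidRels (n - 1)) →* MulAut (FreeGroup (Fin n)))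
    (hρ : ∀ i : Fin (n - 1),
      (ρ (PresentedGroup.of i)) (FreeGroup.of (xL n i)) =
          FreeGroup.of (xL n i) * FreeGroup.of (xR n i) * (FreeGroup.of (xL n i))⁻¹ ∧
      (ρ (PresentedGroup.of i)) (FreeGroup.of (xR n i)) = FreeGroup.of (xL n i) ∧
      ∀ j : Fin n, j ≠ xL n i → j ≠ xR n i →
        (ρ (PresentedGroup.of i)) (FreeGroup.of j) = FreeGroup.of j) :
    Function.Injective ρ :=
  artin_representation_faithful_general n ρ hρ
end

section
/- Let k be a nonzero integer and let w be a braid word that begins with σ_1 and contains no occurrence of σ_1^{−1}. Let σ̂ ∈ Aut(F_n) be the image of the braid represented by w under Wada's representation of type (1) with parameter k. Then the reduced word representing σ̂(x_1) in F_n contains at least 2 occurrences of letters x_1^{±1}. -/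
/-!
Write `a = x₁`, `b = x₂` and split `F_n` as the free product of `⟨a⟩` with the free factor on
the remaining generators. Call `u` alternating (with respect to `a`) if it is a product of
nontrivial syllables taken alternately from the two factors, beginning and ending with a syllable
avoiding `a`; by the normal form theorem this says exactly that the reduced word of `u` is
nonempty and begins and ends with a letter other than `a^{±1}`.

The set `{a} ∪ {a^k u a^{-k} | u alternating}` is preserved by `σ_j^{±1}` for `j ≥ 2`, which fix
`a` and preserve the other factor, and `σ₁` maps it into its second part:
`σ₁(a^k u a^{-k}) = a^k (b^k c b^{-k}) a^{-k}`, where `c = a^{-k} σ₁(u) a^k` is alternating with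
respect to `b` because `u ↦ a^{-k} σ₁(u) a^k` sends `a` to `b` and the other generators to words
avoiding `b`, so that `b^k c b^{-k}` is alternating with respect to `a`. The braid word acts on `x₁`
from right to left and its leftmost letter is `σ₁`, so `σ̂(x₁) = a^k u a^{-k}` with `u` alternating,
whose reduced word is the concatenation of those of `a^k`, `u` and `a^{-k}`.
-/

theorem List.exists_eq_append_cons_of_not_forall {β : Type*} {p : β → Prop} [DecidablePred p]
    {w : List β} (hhead : ∀ x ∈ w.head?, p x) (hall : ¬∀ x ∈ w, p x) :
    ∃ w₁ l w₂, w = w₁ ++ l :: w₂ ∧ w₁ ≠ [] ∧ (∀ x ∈ w₁, p x) ∧ ¬p l := by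
  rcases hd : w.dropWhile p with _ | ⟨l, w₂⟩
  · exact absurd (by simpa using List.dropWhile_eq_nil_iff.1 hd) hall
  refine ⟨w.takeWhile p, l, w₂, by rw [← hd, List.takeWhile_append_dropWhile], ?_,
    fun x hx => by simpa using List.mem_takeWhile_imp hx, ?_⟩
  · obtain ⟨x, w', rfl⟩ := List.exists_cons_of_ne_nil (show w ≠ [] by rintro rfl; simp at hall)
    simpa [List.takeWhile_cons] using hhead x rfl
  · have := List.head?_dropWhile_not p w
    rw [hd] at this
    simpa using this

namespace FreeGroup

variable {α : Type*} {s t : Set α}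

def freeFactor (s : Set α) : Subgroup (FreeGroup α) :=
  Subgroup.closure (of '' s)

theorem of_mem_freeFactor {a : α} (ha : a ∈ s) : of a ∈ freeFactor s :=
  Subgroup.subset_closure ⟨a, ha, rfl⟩

theorem mk_mem_freeFactor {w : List (α × Bool)} (hw : ∀ l ∈ w, l.1 ∈ s) :
    mk w ∈ freeFactor s := by
  induction w with
  | nil => exact one_mem _
  | cons l w ih =>
    rw [← List.singleton_append, ← mul_mk]
    refine mul_mem ?_ (ih fun l' hl' => hw l' (List.mem_cons_of_mem l hl'))
    obtain ⟨a, _ | _⟩ := l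
    · exact inv_mem (of_mem_freeFactor (hw _ List.mem_cons_self))
    · exact of_mem_freeFactor (hw _ List.mem_cons_self)

theorem map_mem_freeFactor {F : Type*} [FunLike F (FreeGroup α) (FreeGroup α)]
    [MonoidHomClass F (FreeGroup α) (FreeGroup α)] (f : F)
    (h : ∀ a ∈ s, f (of a) ∈ freeFactor t) {g : FreeGroup α} (hg : g ∈ freeFactor s) :
    f g ∈ freeFactor t :=
  (Subgroup.closure_le ((freeFactor t).comap (f : FreeGroup α →* FreeGroup α))).2
    (by rintro _ ⟨a, ha, rfl⟩; exact h a ha) hg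

def EndsOutside (s : Set α) (w : List (α × Bool)) : Prop :=
  w ≠ [] ∧ (∀ l ∈ w.head?, l.1 ∉ s) ∧ ∀ l ∈ w.getLast?, l.1 ∉ s

theorem EndsOutside.append_append {w₁ w₂ : List (α × Bool)} (h₁ : EndsOutside s w₁)
    (h₂ : EndsOutside s w₂) (v : List (α × Bool)) : EndsOutside s (w₁ ++ v ++ w₂) := by
  refine ⟨by simp [h₁.1], ?_, ?_⟩
  · rw [List.append_assoc, List.head?_append_of_ne_nil _ h₁.1]
    exact h₁.2.1
  · rw [List.getLast?_append_of_ne_nil _ h₂.1]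
    exact h₂.2.2

inductive IsAlternating (s : Set α) : FreeGroup α → Prop
  | of_mem {h : FreeGroup α} : h ∈ freeFactor sᶜ → h ≠ 1 → IsAlternating s h
  | mul {h g u : FreeGroup α} : h ∈ freeFactor sᶜ → h ≠ 1 → g ∈ freeFactor s → g ≠ 1 →
      IsAlternating s u → IsAlternating s (h * g * u)

theorem IsAlternating.map {F : Type*} [FunLike F (FreeGroup α) (FreeGroup α)]
    [MonoidHomClass F (FreeGroup α) (FreeGroup α)] (f : F) (hf : Function.Injective f)
    (hs : ∀ a ∈ s, f (of a) ∈ freeFactor t) (hsc : ∀ a ∈ sᶜ, f (of a) ∈ freeFactor tᶜ)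
    {u : FreeGroup α} (hu : IsAlternating s u) : IsAlternating t (f u) := by
  induction hu with
  | of_mem hh hh₁ =>
    exact .of_mem (map_mem_freeFactor f hsc hh) ((map_ne_one_iff f hf).2 hh₁)
  | mul hh hh₁ hg hg₁ _ ih =>
    rw [_root_.map_mul, _root_.map_mul]
    exact .mul (map_mem_freeFactor f hsc hh) ((map_ne_one_iff f hf).2 hh₁)
      (map_mem_freeFactor f hs hg) ((map_ne_one_iff f hf).2 hg₁) ih

section NormalForm

variable [DecidableEq α]

theorem mem_freeFactor_iff {g : FreeGroup α} : g ∈ freeFactor s ↔ ∀ l ∈ g.toWord, l.1 ∈ s := by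
  refine ⟨fun hg => ?_, fun h => mk_toWord (x := g) ▸ mk_mem_freeFactor h⟩
  induction hg using Subgroup.closure_induction with
  | mem _ hx =>
    obtain ⟨a, ha, rfl⟩ := hx
    simpa using ha
  | one => simp
  | mul x y _ _ hx hy =>
    intro l hl
    rcases List.mem_append.1 ((toWord_mul_sublist x y).subset hl) with hl | hl
    exacts [hx l hl, hy l hl]
  | inv x _ hx =>
    intro l hl
    rw [toWord_inv, invRev, List.mem_reverse, List.mem_map] at hl
    obtain ⟨l', hl', rfl⟩ := hl
    exact hx l' hl'

theorem mk_ne_one_of_isReduced {w : List (α × Bool)} (hr : IsReduced w) (hw : w ≠ []) :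
    mk w ≠ 1 := by
  rwa [Ne, ← toWord_eq_nil_iff, toWord_mk, hr.reduce_eq]

theorem toWord_mul_of_ne {x y : FreeGroup α}
    (h : ∀ l ∈ x.toWord.getLast?, ∀ l' ∈ y.toWord.head?, l.1 ≠ l'.1) :
    (x * y).toWord = x.toWord ++ y.toWord := by
  rw [toWord_mul, IsReduced.reduce_eq]
  exact List.isChain_append.2 ⟨isReduced_toWord, isReduced_toWord,
    fun l hl l' hl' heq => absurd heq (h l hl l' hl')⟩

theorem toWord_mul_mul_of_ne {x g y : FreeGroup α} (hg : g ≠ 1)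
    (hxg : ∀ l ∈ x.toWord.getLast?, ∀ l' ∈ g.toWord.head?, l.1 ≠ l'.1)
    (hgy : ∀ l ∈ g.toWord.getLast?, ∀ l' ∈ y.toWord.head?, l.1 ≠ l'.1) :
    (x * g * y).toWord = x.toWord ++ g.toWord ++ y.toWord := by
  have hxg' := toWord_mul_of_ne hxg
  rw [toWord_mul_of_ne, hxg']
  rwa [hxg', List.getLast?_append_of_ne_nil _ (by simpa using hg)]

theorem endsOutside_toWord_of_mem {h : FreeGroup α} (hh : h ∈ freeFactor sᶜ) (hh₁ : h ≠ 1) :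
    EndsOutside s h.toWord :=
  ⟨by simpa using hh₁, fun l hl => mem_freeFactor_iff.1 hh l (List.mem_of_mem_head? hl),
    fun l hl => mem_freeFactor_iff.1 hh l (List.mem_of_mem_getLast? hl)⟩

theorem toWord_mul_mul_of_mem {x g y : FreeGroup α} (hx : ∀ l ∈ x.toWord.getLast?, l.1 ∉ s)
    (hg : g ∈ freeFactor s) (hg₁ : g ≠ 1) (hy : ∀ l ∈ y.toWord.head?, l.1 ∉ s) :
    (x * g * y).toWord = x.toWord ++ g.toWord ++ y.toWord :=
  toWord_mul_mul_of_ne hg₁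
    (fun l hl l' hl' e => hx l hl (e ▸ mem_freeFactor_iff.1 hg l' (List.mem_of_mem_head? hl')))
    (fun l hl l' hl' e => hy l' hl' (e ▸ mem_freeFactor_iff.1 hg l (List.mem_of_mem_getLast? hl)))

theorem IsAlternating.endsOutside {u : FreeGroup α} (hu : IsAlternating s u) :
    EndsOutside s u.toWord := by
  induction hu with
  | of_mem hh hh₁ => exact endsOutside_toWord_of_mem hh hh₁
  | mul hh hh₁ hg hg₁ _ ih =>
    have hh' := endsOutside_toWord_of_mem hh hh₁
    rw [toWord_mul_mul_of_mem hh'.2.2 hg hg₁ ih.2.1]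
    exact hh'.append_append ih _

/-- After splitting off the first maximal block of letters outside `s` and the following block of
letters in `s`, what remains is a shorter reduced word with both ends outside `s`. -/
theorem isAlternating_mk {w : List (α × Bool)} (hr : IsReduced w) (hw : EndsOutside s w) :
    IsAlternating s (mk w) := by
  classical
  obtain ⟨hne, hhead, hlast⟩ := hw
  by_cases hall : ∀ l ∈ w, l.1 ∈ sᶜ
  · exact .of_mem (mk_mem_freeFactor hall) (mk_ne_one_of_isReduced hr hne)
  obtain ⟨w₁, l, w₂, rfl, hw₁, hw₁s, hl⟩ :=
    List.exists_eq_append_cons_of_not_forall (p := fun l : α × Bool => l.1 ∈ sᶜ) hhead hall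
  have hlast₂ : ∀ x ∈ (l :: w₂).getLast?, x.1 ∉ s := by
    rwa [List.getLast?_append_of_ne_nil _ (List.cons_ne_nil _ _)] at hlast
  obtain ⟨w₃, l', w₄, hw₂, hw₃, hw₃s, hl'⟩ :=
    List.exists_eq_append_cons_of_not_forall (p := fun l : α × Bool => l.1 ∈ s) (w := l :: w₂)
      (by simpa using hl) fun h => hlast₂ _ (List.getLast?_eq_some_getLast (List.cons_ne_nil _ _))
        (h _ (List.getLast_mem _))
  have hr' : IsReduced (w₁ ++ w₃ ++ l' :: w₄) := by rwa [List.append_assoc, ← hw₂]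
  have hw₄ : EndsOutside s (l' :: w₄) := by
    refine ⟨List.cons_ne_nil _ _, by simpa using hl', ?_⟩
    rwa [hw₂, List.getLast?_append_of_ne_nil _ (List.cons_ne_nil _ _)] at hlast₂
  have := List.length_pos_of_ne_nil hw₁
  have : (l' :: w₄).length < (w₁ ++ l :: w₂).length := by
    rw [hw₂]; simp only [List.length_append]; omega
  rw [hw₂, ← List.append_assoc, ← mul_mk, ← mul_mk]
  exact .mul (mk_mem_freeFactor hw₁s)
    (mk_ne_one_of_isReduced (hr'.infix ⟨[], w₃ ++ l' :: w₄, by simp⟩) hw₁)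
    (mk_mem_freeFactor hw₃s) (mk_ne_one_of_isReduced (hr'.infix ⟨w₁, l' :: w₄, rfl⟩) hw₃)
    (isAlternating_mk (hr'.infix ⟨w₁ ++ w₃, [], by simp⟩) hw₄)
termination_by w.length

theorem isAlternating_iff {u : FreeGroup α} : IsAlternating s u ↔ EndsOutside s u.toWord :=
  ⟨IsAlternating.endsOutside, fun h => mk_toWord (x := u) ▸ isAlternating_mk isReduced_toWord h⟩

theorem IsAlternating.toWord_mul_mul {g c g' : FreeGroup α} (hc : IsAlternating s c)
    (hg : g ∈ freeFactor s) (hg' : g' ∈ freeFactor s) :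
    (g * c * g').toWord = g.toWord ++ c.toWord ++ g'.toWord := by
  have hc' := hc.endsOutside
  exact toWord_mul_mul_of_ne (by simpa using hc'.1)
    (fun l hl l' hl' e =>
      hc'.2.1 l' hl' (e ▸ mem_freeFactor_iff.1 hg l (List.mem_of_mem_getLast? hl)))
    (fun l hl l' hl' e =>
      hc'.2.2 l hl (e ▸ mem_freeFactor_iff.1 hg' l' (List.mem_of_mem_head? hl')))

theorem IsAlternating.zpow_mul_mul_zpow {a b : α} (hab : a ≠ b) {k : ℤ} (hk : k ≠ 0)
    {c : FreeGroup α} (hc : IsAlternating {b} c) :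
    IsAlternating {a} (of b ^ k * c * of b ^ (-k)) := by
  have hb : ∀ m : ℤ, of b ^ m ∈ freeFactor {b} := zpow_mem (of_mem_freeFactor rfl)
  have hb' : ∀ m : ℤ, m ≠ 0 → EndsOutside {a} (of b ^ m).toWord := fun m hm =>
    endsOutside_toWord_of_mem (zpow_mem (of_mem_freeFactor hab.symm) m) (by simpa using hm)
  rw [isAlternating_iff, hc.toWord_mul_mul (hb k) (hb (-k))]
  exact (hb' k hk).append_append (hb' (-k) (neg_ne_zero.2 hk)) _

end NormalForm

theorem mapsTo_mk {ι M : Type*} [Mul M] (ψ : FreeGroup ι →* MulAut M) {S : Set M}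
    {w : List (ι × Bool)} (hpos : ∀ i, (i, true) ∈ w → Set.MapsTo (ψ (of i)) S S)
    (hneg : ∀ i, (i, false) ∈ w → Set.MapsTo ⇑(ψ (of i))⁻¹ S S) :
    Set.MapsTo (ψ (mk w)) S S := by
  induction w with
  | nil =>
    rw [← one_eq_mk, _root_.map_one, MulAut.coe_one]
    exact Set.mapsTo_id S
  | cons p w ih =>
    rw [← List.singleton_append, ← mul_mk, _root_.map_mul, MulAut.coe_mul]
    refine Set.MapsTo.comp ?_ (ih (fun i hi => hpos i (List.mem_cons_of_mem p hi))
      fun i hi => hneg i (List.mem_cons_of_mem p hi))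
    obtain ⟨i, _ | _⟩ := p
    · rw [show mk [(i, false)] = (of i)⁻¹ from rfl, _root_.map_inv]
      exact hneg i List.mem_cons_self
    · exact hpos i List.mem_cons_self

section Wada

variable {a b i j : α} {k : ℤ} {σ : MulAut (FreeGroup α)}

def IsWadaGenerator (k : ℤ) (i j : α) (σ : MulAut (FreeGroup α)) : Prop :=
  σ (of i) = of i ^ k * of j * of i ^ (-k) ∧ σ (of j) = of i ∧
    ∀ m, m ≠ i → m ≠ j → σ (of m) = of m

def conjAlternating (a : α) (k : ℤ) : Set (FreeGroup α) :=
  {v | ∃ u, IsAlternating {a} u ∧ v = of a ^ k * u * of a ^ (-k)}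

namespace IsWadaGenerator

theorem inv_apply_of_left (hσ : IsWadaGenerator k i j σ) : σ⁻¹ (of i) = of j := by
  rw [MulAut.inv_apply, MulEquiv.symm_apply_eq, hσ.2.1]

theorem inv_apply_of_right (hσ : IsWadaGenerator k i j σ) :
    σ⁻¹ (of j) = of j ^ (-k) * of i * of j ^ k := by
  rw [MulAut.inv_apply, MulEquiv.symm_apply_eq, _root_.map_mul, _root_.map_mul, map_zpow,
    map_zpow, hσ.1, hσ.2.1]
  group

theorem inv_apply_of_of_ne (hσ : IsWadaGenerator k i j σ) {m : α} (hi : m ≠ i) (hj : m ≠ j) :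
    σ⁻¹ (of m) = of m := by
  rw [MulAut.inv_apply, MulEquiv.symm_apply_eq, hσ.2.2 m hi hj]

theorem apply_mem_freeFactor (hσ : IsWadaGenerator k i j σ) (hi : i ∈ s) (hj : j ∈ s)
    {g : FreeGroup α} (hg : g ∈ freeFactor s) : σ g ∈ freeFactor s := by
  refine map_mem_freeFactor σ (fun m hm => ?_) hg
  have hi' := of_mem_freeFactor hi
  by_cases hmi : m = i
  · rw [hmi, hσ.1]
    exact mul_mem (mul_mem (zpow_mem hi' k) (of_mem_freeFactor hj)) (zpow_mem hi' (-k))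
  by_cases hmj : m = j
  · rwa [hmj, hσ.2.1]
  · rw [hσ.2.2 m hmi hmj]
    exact of_mem_freeFactor hm

theorem inv_apply_mem_freeFactor (hσ : IsWadaGenerator k i j σ) (hi : i ∈ s) (hj : j ∈ s)
    {g : FreeGroup α} (hg : g ∈ freeFactor s) : σ⁻¹ g ∈ freeFactor s := by
  refine map_mem_freeFactor σ⁻¹ (fun m hm => ?_) hg
  have hj' := of_mem_freeFactor hj
  by_cases hmj : m = j
  · rw [hmj, hσ.inv_apply_of_right]
    exact mul_mem (mul_mem (zpow_mem hj' (-k)) (of_mem_freeFactor hi)) (zpow_mem hj' k)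
  by_cases hmi : m = i
  · rwa [hmi, hσ.inv_apply_of_left]
  · rw [hσ.inv_apply_of_of_ne hmi hmj]
    exact of_mem_freeFactor hm

end IsWadaGenerator

theorem mapsTo_insert_conjAlternating (ha : σ (of a) = of a)
    (hσ : ∀ g ∈ freeFactor {a}ᶜ, σ g ∈ freeFactor {a}ᶜ) :
    Set.MapsTo σ (insert (of a) (conjAlternating a k)) (insert (of a) (conjAlternating a k)) := by
  rintro v (rfl | ⟨u, hu, rfl⟩)
  · exact Or.inl ha
  · refine Or.inr ⟨σ u, hu.map σ σ.injective ?_ fun m hm => hσ _ (of_mem_freeFactor hm), ?_⟩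
    · rintro m rfl
      rw [ha]
      exact of_mem_freeFactor (Set.mem_singleton _)
    · simp [ha]

theorem IsWadaGenerator.mapsTo_insert_conjAlternating {k' : ℤ}
    (hσ : IsWadaGenerator k' i j σ) (hi : i ≠ a) (hj : j ≠ a) :
    Set.MapsTo σ (insert (of a) (conjAlternating a k)) (insert (of a) (conjAlternating a k)) ∧
      Set.MapsTo ⇑(σ⁻¹) (insert (of a) (conjAlternating a k))
        (insert (of a) (conjAlternating a k)) := by
  have hi' : i ∈ ({a}ᶜ : Set α) := hi
  have hj' : j ∈ ({a}ᶜ : Set α) := hj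
  exact ⟨FreeGroup.mapsTo_insert_conjAlternating (hσ.2.2 a hi.symm hj.symm)
      fun _ => hσ.apply_mem_freeFactor hi' hj',
    FreeGroup.mapsTo_insert_conjAlternating (hσ.inv_apply_of_of_ne hi.symm hj.symm)
      fun _ => hσ.inv_apply_mem_freeFactor hi' hj'⟩

variable [DecidableEq α]

theorem IsWadaGenerator.mapsTo_conjAlternating (hk : k ≠ 0) (hab : a ≠ b)
    (hσ : IsWadaGenerator k a b σ) :
    Set.MapsTo σ (insert (of a) (conjAlternating a k)) (conjAlternating a k) := by
  rintro v (rfl | ⟨u, hu, rfl⟩)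
  · exact ⟨of b, .of_mem (of_mem_freeFactor hab.symm) (of_ne_one b), hσ.1⟩
  set τ := MulAut.conj (of a ^ (-k)) * σ
  have hτ : ∀ g, τ g = of a ^ (-k) * σ g * of a ^ k := fun g => by
    rw [MulAut.mul_apply, MulAut.conj_apply, ← zpow_neg, neg_neg]
  have hc : IsAlternating {b} (τ u) := by
    refine hu.map τ τ.injective (fun m hm => ?_) (fun m hm => ?_)
    · rw [Set.mem_singleton_iff.1 hm, hτ, hσ.1,
        show of a ^ (-k) * (of a ^ k * of b * of a ^ (-k)) * of a ^ k = of b by group]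
      exact of_mem_freeFactor (Set.mem_singleton _)
    · have ha : of a ∈ freeFactor ({b}ᶜ : Set α) := of_mem_freeFactor hab
      have hσm : σ (of m) ∈ freeFactor ({b}ᶜ : Set α) := by
        by_cases hmb : m = b
        · rwa [hmb, hσ.2.1]
        · rw [hσ.2.2 m hm hmb]
          exact of_mem_freeFactor hmb
      rw [hτ]
      exact mul_mem (mul_mem (zpow_mem ha _) hσm) (zpow_mem ha _)
  refine ⟨of b ^ k * τ u * of b ^ (-k), hc.zpow_mul_mul_zpow hab hk, ?_⟩
  have hσa : σ (of a) = of a ^ k * of b * (of a ^ k)⁻¹ := by rw [hσ.1, zpow_neg]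
  rw [hτ, _root_.map_mul, _root_.map_mul, map_zpow, map_zpow, hσa, conj_zpow, conj_zpow]
  group

theorem two_le_countP_of_mem_conjAlternating (hk : k ≠ 0) {v : FreeGroup α}
    (hv : v ∈ conjAlternating a k) : 2 ≤ v.toWord.countP (fun l => decide (l.1 = a)) := by
  obtain ⟨u, hu, rfl⟩ := hv
  have ha : ∀ m : ℤ, of a ^ m ∈ freeFactor {a} := zpow_mem (of_mem_freeFactor rfl)
  have hpos : ∀ m : ℤ, m ≠ 0 → 0 < (of a ^ m).toWord.countP (fun l => decide (l.1 = a)) := by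
    intro m hm
    obtain ⟨l, hl⟩ := List.exists_mem_of_ne_nil _ (by simpa using hm : (of a ^ m).toWord ≠ [])
    exact List.countP_pos_iff.2
      ⟨l, hl, by simpa using mem_freeFactor_iff.1 (ha m) l hl⟩
  rw [hu.toWord_mul_mul (ha k) (ha (-k)), List.countP_append, List.countP_append]
  have := hpos k hk
  have := hpos (-k) (neg_ne_zero.2 hk)
  omega

end Wada

end FreeGroup

/-- If `w` is a braid word beginning with `σ_1` and containing no occurrence of
`σ_1⁻¹`, and `σ̂` is the image of the braid represented by `w` under Wada's
representation of type (1) with nonzero parameter `k`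
(`σ_i ↦ (x_i ↦ x_i^k x_{i+1} x_i^{-k}, x_{i+1} ↦ x_i)`), then the reduced word of
`σ̂(x_1)` contains at least 2 occurrences of letters `x_1^{±1}`. -/
theorem wada_type1_sigma1_positive_two_occurrences (n : ℕ) (hn : 2 ≤ n)
    (k : ℤ) (hk : k ≠ 0)
    (φ : PresentedGroup (braidRels (n - 1)) →* MulAut (FreeGroup (Fin n)))
    (hφ : ∀ i : Fin (n - 1),
      (φ (PresentedGroup.of i)) (FreeGroup.of (xL n i)) =
          FreeGroup.of (xL n i) ^ k * FreeGroup.of (xR n i) * FreeGroup.of (xL n i) ^ (-k) ∧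
      (φ (PresentedGroup.of i)) (FreeGroup.of (xR n i)) = FreeGroup.of (xL n i) ∧
      ∀ j : Fin n, j ≠ xL n i → j ≠ xR n i →
        (φ (PresentedGroup.of i)) (FreeGroup.of j) = FreeGroup.of j)
    (w : List (Fin (n - 1) × Bool))
    (hhead : w.head? = some ((⟨0, by omega⟩ : Fin (n - 1)), true))
    (hnonneg : ∀ p ∈ w, p ≠ ((⟨0, by omega⟩ : Fin (n - 1)), false)) :
    2 ≤ ((φ (PresentedGroup.mk (braidRels (n - 1)) (FreeGroup.mk w)))
          (FreeGroup.of (⟨0, by omega⟩ : Fin n))).toWord.countP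
            (fun p => decide (p.1 = (⟨0, by omega⟩ : Fin n))) := by
  set a : Fin n := ⟨0, by omega⟩
  set e₀ : Fin (n - 1) := ⟨0, by omega⟩
  have hab : a ≠ ⟨1, by omega⟩ := by simp [a, Fin.ext_iff]
  have hσ : ∀ j, FreeGroup.IsWadaGenerator k (xL n j) (xR n j) (φ (PresentedGroup.of j)) := hφ
  have hσ₀ : FreeGroup.IsWadaGenerator k a ⟨1, by omega⟩ (φ (PresentedGroup.of e₀)) := hσ e₀
  have hpassive : ∀ j ≠ e₀, xL n j ≠ a ∧ xR n j ≠ a := fun j hj =>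
    ⟨fun h => hj (by simpa [xL, a, e₀, Fin.ext_iff] using h), by simp [xR, a, Fin.ext_iff]⟩
  obtain ⟨u, rfl⟩ := List.head?_eq_some_iff.1 hhead
  have hv : φ (PresentedGroup.mk _ (FreeGroup.mk u)) (FreeGroup.of a) ∈
      insert (FreeGroup.of a) (FreeGroup.conjAlternating a k) := by
    refine FreeGroup.mapsTo_mk (φ.comp (PresentedGroup.mk _)) (fun j _ => ?_) (fun j hj => ?_)
      (Set.mem_insert _ _)
    · by_cases hj : j = e₀
      · rw [hj]
        exact (hσ₀.mapsTo_conjAlternating hk hab).mono_right (Set.subset_insert _ _)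
      · exact ((hσ j).mapsTo_insert_conjAlternating (hpassive j hj).1 (hpassive j hj).2).1
    · have hj : j ≠ e₀ := by rintro rfl; exact hnonneg _ (List.mem_cons_of_mem _ hj) rfl
      exact ((hσ j).mapsTo_insert_conjAlternating (hpassive j hj).1 (hpassive j hj).2).2
  rw [← List.singleton_append, ← FreeGroup.mul_mk, map_mul, map_mul, MulAut.mul_apply]
  exact FreeGroup.two_le_countP_of_mem_conjAlternating hk (hσ₀.mapsTo_conjAlternating hk hab hv)
end

section
/- Let k be a nonzero integer, let i ≥ 2, and let σ̂_i^{(k)} ∈ Aut(F_n) be the automorphism taking x_i to x_i^k x_{i+1} x_i^{−k}, x_{i+1} to x_i, and fixing all other free generators. If w ∈ F_n has reduced word of the form x_1^k u x_1^{−k}, where u is a nonempty reduced word that neither begins nor ends with a letter x_1^{±1}, then the reduced word of σ̂_i^{(k)}(w) is of the same form x_1^k u' x_1^{−k}, where u' is a nonempty reduced word that neither begins nor ends with a letter x_1^{±1}. -/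
/-!
The generator `x₁` is fixed by `σ̂`, and every other generator is sent into the subgroup of
elements whose reduced word avoids `x₁`. Cut the reduced word of `u` into maximal `x₁`-free
syllables `aⱼ` and `x₁`-powers `cⱼ`, `u = a₁ c₁ a₂ ⋯ c_{r-1} a_r`. Then
`σ̂(u) = σ̂(a₁) c₁ σ̂(a₂) ⋯ σ̂(a_r)`, and since each `σ̂(aⱼ)` is a nontrivial `x₁`-free word
(by injectivity), no cancellation occurs at the junctions: this concatenation is already reduced,
and it begins and ends with letters other than `x₁^{±1}`.
-/

theorem List.exists_eq_append_forall_and_head?_not {β : Type*} (P : β → Prop) [DecidablePred P]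
    (L : List β) : ∃ A B, L = A ++ B ∧ (∀ a ∈ A, P a) ∧ ∀ b ∈ B.head?, ¬ P b := by
  induction L with
  | nil => exact ⟨[], [], rfl, by simp, by simp⟩
  | cons b L ih =>
    by_cases hb : P b
    · obtain ⟨A, B, rfl, hA, hB⟩ := ih
      exact ⟨b :: A, B, rfl, by simpa [hb] using hA, hB⟩
    · exact ⟨[], b :: L, rfl, by simp, by simpa using hb⟩

namespace FreeGroup

variable {α : Type*}

def AvoidsAtEnds (x : α) (L : List (α × Bool)) : Prop :=
  L ≠ [] ∧ (∀ p ∈ L.head?, p.1 ≠ x) ∧ ∀ p ∈ L.getLast?, p.1 ≠ x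

theorem AvoidsAtEnds.append {x : α} {P M R : List (α × Bool)} (hP : AvoidsAtEnds x P)
    (hR : AvoidsAtEnds x R) : AvoidsAtEnds x (P ++ M ++ R) := by
  refine ⟨by simp [hP.1], ?_, ?_⟩
  · rw [List.append_assoc, List.head?_append_of_ne_nil _ hP.1]
    exact hP.2.1
  · rw [List.getLast?_append_of_ne_nil _ hR.1]
    exact hR.2.2

theorem mk_mem_closure_of_forall_fst_mem {S : Set α} {L : List (α × Bool)}
    (h : ∀ p ∈ L, p.1 ∈ S) : mk L ∈ Subgroup.closure (of '' S) := by
  induction L with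
  | nil => exact one_mem _
  | cons p L ih =>
    rw [show mk (p :: L) = mk [p] * mk L by rw [mul_mk]; rfl]
    refine mul_mem ?_ (ih fun q hq => h q (List.mem_cons_of_mem _ hq))
    have hp := Subgroup.subset_closure (Set.mem_image_of_mem of (h p List.mem_cons_self))
    obtain ⟨a, _ | _⟩ := p
    · rw [show mk [(a, false)] = (of a)⁻¹ by rw [of, inv_mk]; rfl]
      exact inv_mem hp
    · exact hp

theorem map_mk_eq_self_of_forall_fst_eq {x : α} {φ : FreeGroup α →* FreeGroup α}
    (hfix : φ (of x) = of x) {L : List (α × Bool)} (hL : ∀ p ∈ L, p.1 = x) :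
    φ (mk L) = mk L := by
  have hagree : Set.EqOn φ (MonoidHom.id _) (of '' {x}) := by
    rintro _ ⟨a, rfl, rfl⟩
    exact hfix
  exact MonoidHom.eqOn_closure hagree (mk_mem_closure_of_forall_fst_mem (S := {x}) hL)

theorem isReduced_append_append {x : α} {P C R : List (α × Bool)} (hP : IsReduced P)
    (hPx : ∀ p ∈ P, p.1 ≠ x) (hC : IsReduced C) (hCne : C ≠ []) (hCx : ∀ p ∈ C, p.1 = x)
    (hR : IsReduced R) (hRx : ∀ p ∈ R.head?, p.1 ≠ x) : IsReduced (P ++ C ++ R) := by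
  refine List.IsChain.append (List.IsChain.append hP hC ?_) hR ?_
  · intro a ha b hb hab
    exact (hPx a (List.mem_of_mem_getLast? ha) (hab.trans (hCx b (List.mem_of_mem_head? hb)))).elim
  · intro a ha b hb hab
    rw [List.getLast?_append_of_ne_nil _ hCne] at ha
    exact (hRx b hb (hab ▸ hCx a (List.mem_of_mem_getLast? ha))).elim

theorem exists_eq_append_append_of_avoidsAtEnds {x : α} {L : List (α × Bool)}
    (hL : AvoidsAtEnds x L) (hx : ∃ p ∈ L, p.1 = x) :
    ∃ A C D, L = A ++ C ++ D ∧ A ≠ [] ∧ (∀ p ∈ A, p.1 ≠ x) ∧ C ≠ [] ∧ (∀ p ∈ C, p.1 = x) ∧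
      AvoidsAtEnds x D := by
  classical
  obtain ⟨hne, hhead, hlast⟩ := hL
  obtain ⟨A, B, rfl, hA, hB⟩ := List.exists_eq_append_forall_and_head?_not (·.1 ≠ x) L
  obtain ⟨C, D, rfl, hC, hD⟩ := List.exists_eq_append_forall_and_head?_not (·.1 = x) B
  have hCD : C ++ D ≠ [] := by
    rintro h
    obtain ⟨p, hp, hpx⟩ := hx
    rw [h, List.append_nil] at hp
    exact hA p hp hpx
  obtain ⟨b, hb⟩ := Option.ne_none_iff_exists'.mp (mt List.head?_eq_none_iff.mp hCD)
  have hbx : b.1 = x := by simpa using hB b hb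
  have hCne : C ≠ [] := by
    rintro rfl
    exact hD b hb hbx
  have hDne : D ≠ [] := by
    rintro rfl
    simp only [List.append_nil, List.getLast?_append_of_ne_nil _ hCne] at hlast
    exact hlast _ (List.getLast?_eq_some_getLast hCne) (hC _ (List.getLast_mem hCne))
  refine ⟨A, C, D, (List.append_assoc _ _ _).symm, ?_, hA, hCne, hC, hDne, hD, ?_⟩
  · rintro rfl
    exact hhead b hb hbx
  · rwa [List.getLast?_append_of_ne_nil _ hCD, List.getLast?_append_of_ne_nil _ hDne] at hlast

section DecidableEq

variable [DecidableEq α]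

def avoiding (x : α) : Subgroup (FreeGroup α) where
  carrier := {g | ∀ p ∈ g.toWord, p.1 ≠ x}
  mul_mem' {g h} hg hh p hp := by
    rcases List.mem_append.mp ((toWord_mul_sublist g h).subset hp) with hp | hp
    exacts [hg p hp, hh p hp]
  one_mem' p hp := by simp at hp
  inv_mem' {g} hg p hp := by
    rw [toWord_inv, invRev, List.mem_reverse, List.mem_map] at hp
    obtain ⟨q, hq, rfl⟩ := hp
    exact hg q hq

theorem mem_avoiding {x : α} {g : FreeGroup α} : g ∈ avoiding x ↔ ∀ p ∈ g.toWord, p.1 ≠ x :=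
  Iff.rfl

theorem of_mem_avoiding {x a : α} (h : a ≠ x) : of a ∈ avoiding x := by
  simpa [mem_avoiding, toWord_of] using h

theorem avoidsAtEnds_toWord_of_mem_avoiding {x : α} {g : FreeGroup α} (hg : g ∈ avoiding x)
    (h1 : g ≠ 1) : AvoidsAtEnds x g.toWord :=
  ⟨by rwa [Ne, toWord_eq_nil_iff], fun p hp => hg p (List.mem_of_mem_head? hp),
    fun p hp => hg p (List.mem_of_mem_getLast? hp)⟩

theorem map_mk_mem_avoiding {x : α} {φ : FreeGroup α →* FreeGroup α}
    (havoid : ∀ a, a ≠ x → φ (of a) ∈ avoiding x) {L : List (α × Bool)}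
    (hL : ∀ p ∈ L, p.1 ≠ x) : φ (mk L) ∈ avoiding x := by
  have hle : Subgroup.closure (of '' {a | a ≠ x}) ≤ (avoiding x).comap φ := by
    rw [Subgroup.closure_le]
    rintro _ ⟨a, ha, rfl⟩
    exact havoid a ha
  exact hle (mk_mem_closure_of_forall_fst_mem hL)

theorem avoidsAtEnds_toWord_map_mk {x : α} {φ : FreeGroup α →* FreeGroup α}
    (hinj : Function.Injective φ) (hfix : φ (of x) = of x)
    (havoid : ∀ a, a ≠ x → φ (of a) ∈ avoiding x) {L : List (α × Bool)} (hred : IsReduced L)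
    (hL : AvoidsAtEnds x L) : AvoidsAtEnds x (φ (mk L)).toWord := by
  have hne : ∀ {M : List (α × Bool)}, IsReduced M → M ≠ [] → φ (mk M) ≠ 1 := by
    intro M hM hMne h
    rw [← φ.map_one] at h
    exact hMne (by rw [← hM.reduce_eq, ← toWord_mk, hinj h, toWord_one])
  induction hlen : L.length using Nat.strong_induction_on generalizing L with
  | _ m ih =>
  by_cases hx : ∃ p ∈ L, p.1 = x
  · obtain ⟨A, C, D, rfl, hA, hAx, hC, hCx, hD⟩ :=
      exists_eq_append_append_of_avoidsAtEnds hL hx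
    have hP := map_mk_mem_avoiding havoid hAx
    have hR := ih D.length (by have := List.length_pos_iff.mpr hA; simp [← hlen]; omega)
      (hred.infix (List.suffix_append _ _).isInfix) hD rfl
    have hmap : φ (mk (A ++ C ++ D)) = mk ((φ (mk A)).toWord ++ C ++ (φ (mk D)).toWord) := by
      rw [← mul_mk, ← mul_mk, _root_.map_mul, _root_.map_mul,
        map_mk_eq_self_of_forall_fst_eq hfix hCx, ← mul_mk, ← mul_mk, mk_toWord, mk_toWord]
    rw [hmap, toWord_mk, (isReduced_append_append isReduced_toWord hP
      (hred.infix (List.infix_append _ _ _)) hC hCx isReduced_toWord hR.2.1).reduce_eq]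
    have hAred : IsReduced A := hred.infix ⟨[], C ++ D, by simp⟩
    exact (avoidsAtEnds_toWord_of_mem_avoiding hP (hne hAred hA)).append hR
  · push Not at hx
    exact avoidsAtEnds_toWord_of_mem_avoiding (map_mk_mem_avoiding havoid hx) (hne hred hL.1)

end DecidableEq

end FreeGroup

/-- Let `k ≠ 0`, let `i ≥ 2` (with `x_i, x_{i+1}` among the generators,
`1`-indexed), and let `σ̂_i^{(k)} ∈ Aut(F_n)` be the automorphism with
`x_i ↦ x_i^k x_{i+1} x_i^{-k}`, `x_{i+1} ↦ x_i`, fixing all other free generators.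
If `w ∈ F_n` has reduced word of the form `x_1^k u x_1^{-k}` with `u` a nonempty
reduced word neither beginning nor ending with a letter `x_1^{±1}`, then the reduced
word of `σ̂_i^{(k)}(w)` has the same form `x_1^k u' x_1^{-k}`. -/
theorem wada_type1_sigmaihat_preserves_form (n : ℕ) (k : ℤ)
    (i : ℕ) (hi : 2 ≤ i) (hin : i < n)
    (φ : MulAut (FreeGroup (Fin n)))
    (hφ1 : φ (FreeGroup.of (⟨i - 1, by omega⟩ : Fin n)) =
      FreeGroup.of (⟨i - 1, by omega⟩ : Fin n) ^ k * FreeGroup.of (⟨i, hin⟩ : Fin n) *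
        FreeGroup.of (⟨i - 1, by omega⟩ : Fin n) ^ (-k))
    (hφ2 : φ (FreeGroup.of (⟨i, hin⟩ : Fin n)) = FreeGroup.of (⟨i - 1, by omega⟩ : Fin n))
    (hφ3 : ∀ j : Fin n, j ≠ ⟨i - 1, by omega⟩ → j ≠ ⟨i, hin⟩ →
      φ (FreeGroup.of j) = FreeGroup.of j)
    (w u : FreeGroup (Fin n)) (hu : u ≠ 1)
    (huhead : ∀ p ∈ u.toWord.head?, p.1 ≠ (⟨0, by omega⟩ : Fin n))
    (hulast : ∀ p ∈ u.toWord.getLast?, p.1 ≠ (⟨0, by omega⟩ : Fin n))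
    (hw : w = FreeGroup.of (⟨0, by omega⟩ : Fin n) ^ k * u *
      FreeGroup.of (⟨0, by omega⟩ : Fin n) ^ (-k)) :
    ∃ u' : FreeGroup (Fin n), u' ≠ 1 ∧
      (∀ p ∈ u'.toWord.head?, p.1 ≠ (⟨0, by omega⟩ : Fin n)) ∧
      (∀ p ∈ u'.toWord.getLast?, p.1 ≠ (⟨0, by omega⟩ : Fin n)) ∧
      φ w = FreeGroup.of (⟨0, by omega⟩ : Fin n) ^ k * u' *
        FreeGroup.of (⟨0, by omega⟩ : Fin n) ^ (-k) := by
  have hx₁ : (⟨0, by omega⟩ : Fin n) ≠ ⟨i - 1, by omega⟩ := by simp [Fin.ext_iff]; omega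
  have hx₂ : (⟨0, by omega⟩ : Fin n) ≠ ⟨i, hin⟩ := by simp [Fin.ext_iff]; omega
  have havoid : ∀ a, a ≠ ⟨0, by omega⟩ →
      φ (FreeGroup.of a) ∈ FreeGroup.avoiding (⟨0, by omega⟩ : Fin n) := by
    intro a ha
    have hi₁ := FreeGroup.of_mem_avoiding hx₁.symm
    by_cases h₁ : a = ⟨i - 1, by omega⟩
    · rw [h₁, hφ1]
      exact mul_mem (mul_mem (zpow_mem hi₁ k) (FreeGroup.of_mem_avoiding hx₂.symm)) (zpow_mem hi₁ _)
    by_cases h₂ : a = ⟨i, hin⟩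
    · rw [h₂, hφ2]
      exact hi₁
    rw [hφ3 a h₁ h₂]
    exact FreeGroup.of_mem_avoiding ha
  have hends := FreeGroup.avoidsAtEnds_toWord_map_mk (φ := φ.toMonoidHom) φ.injective
    (hφ3 _ hx₁ hx₂) havoid FreeGroup.isReduced_toWord
    ⟨by rwa [Ne, FreeGroup.toWord_eq_nil_iff], huhead, hulast⟩
  rw [FreeGroup.mk_toWord] at hends
  refine ⟨φ u, by simpa [FreeGroup.toWord_eq_nil_iff] using hends.1, hends.2.1, hends.2.2, ?_⟩
  rw [hw, map_mul, map_mul, map_zpow, map_zpow, hφ3 _ hx₁ hx₂]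
end

section
/- Let n ≥ 2 and let k, s be nonzero integers with |k| ≠ |s|. Then the images φ_k(B_n) and φ_s(B_n) of Wada's representations of type (1) with parameters k and s are different subgroups of Aut(F_n). -/
namespace Wada

open Equiv

section Affine

variable {R : Type*} [CommRing R]

def aff (a : Rˣ) (b : R) : Perm R where
  toFun z := a * z + b
  invFun z := ↑a⁻¹ * (z - b)
  left_inv z := by simp
  right_inv z := by simp

@[simp] lemma aff_apply (a : Rˣ) (b z : R) : aff a b z = a * z + b := rfl

lemma aff_mul (a a' : Rˣ) (b b' : R) : aff a b * aff a' b' = aff (a * a') (a * b' + b) := by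
  ext z
  simp only [Perm.mul_apply, aff_apply, Units.val_mul]
  ring

lemma aff_inv (a : Rˣ) (b : R) : (aff a b)⁻¹ = aff a⁻¹ (-(↑a⁻¹ * b)) := by
  rw [inv_eq_iff_mul_eq_one, aff_mul]
  ext z
  simp

lemma exists_aff_zpow (a : Rˣ) (b : R) (m : ℤ) : ∃ c, aff a b ^ m = aff (a ^ m) c := by
  induction m using Int.induction_on with
  | zero => exact ⟨0, by ext; simp⟩
  | succ m ih =>
    obtain ⟨c, hc⟩ := ih
    exact ⟨_, by rw [zpow_add_one, hc, aff_mul, zpow_add_one]⟩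
  | pred m ih =>
    obtain ⟨c, hc⟩ := ih
    exact ⟨_, by rw [zpow_sub_one, hc, aff_inv, aff_mul, zpow_sub_one]⟩

lemma aff_zero_zpow (a : Rˣ) (m : ℤ) : aff a 0 ^ m = aff (a ^ m) 0 := by
  obtain ⟨c, hc⟩ := exists_aff_zpow a 0 m
  have hfix : (aff a 0 ^ m) 0 = 0 := Perm.zpow_apply_eq_self_of_apply_eq_self (by simp) m
  rw [hc, aff_apply, mul_zero, zero_add] at hfix
  rwa [hfix] at hc

/-- `aff a b ^ s` is a translation by some `c`, and commuting with `aff a b` forces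
`a * c = c`, which is also what commuting with `aff a d` asks for. -/
lemma commute_aff_zpow_of_zpow_eq_one {a : Rˣ} {s : ℤ} (hs : a ^ s = 1) (b d : R) :
    Commute (aff a b ^ s) (aff a d) := by
  obtain ⟨c, hc⟩ := exists_aff_zpow a b s
  rw [hs] at hc
  have hcomm : aff 1 c * aff a b = aff a b * aff 1 c := hc ▸ Commute.zpow_left (.refl _) s
  have hfixed : (a : R) * c = c := by
    have := congrArg (· 0) hcomm
    simp only [aff_mul, aff_apply, Units.val_mul, Units.val_one] at this
    linear_combination -this
  rw [hc, Commute, SemiconjBy, aff_mul, aff_mul, hfixed]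
  ext z
  simp only [aff_apply, mul_one, one_mul, Units.val_one]
  ring

end Affine

section FreeGroup

variable {R ι : Type*} [CommRing R]

def affineRep (a : Rˣ) (v : ι → R) : FreeGroup ι →* Perm R :=
  FreeGroup.lift fun j => aff a (v j)

@[simp] lemma affineRep_of (a : Rˣ) (v : ι → R) (j : ι) :
    affineRep a v (FreeGroup.of j) = aff a (v j) :=
  FreeGroup.lift_apply_of

def affineRepStabilizer (a : Rˣ) : Subgroup (MulAut (FreeGroup ι)) where
  carrier := {α | ∃ σ : Perm ι, ∀ v x, affineRep a v (α x) = affineRep a (v ∘ σ) x}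
  one_mem' := ⟨1, fun _ _ => rfl⟩
  mul_mem' := by
    rintro α β ⟨σ, hσ⟩ ⟨τ, hτ⟩
    exact ⟨σ * τ, fun v x => (hσ v (β x)).trans (hτ (v ∘ σ) x)⟩
  inv_mem' := by
    rintro α ⟨σ, hσ⟩
    refine ⟨σ⁻¹, fun v x => ?_⟩
    have h := hσ (v ∘ ⇑σ⁻¹) (α⁻¹ x)
    rwa [MulAut.apply_inv_self, Function.comp_assoc, ← Perm.coe_mul, inv_mul_cancel,
      Perm.coe_one, Function.comp_id, eq_comm] at h

lemma mem_affineRepStabilizer_iff {a : Rˣ} {α : MulAut (FreeGroup ι)} :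
    α ∈ affineRepStabilizer a ↔
      ∃ σ : Perm ι, ∀ v j, affineRep a v (α (.of j)) = aff a (v (σ j)) := by
  refine exists_congr fun σ => forall_congr' fun v => ⟨fun h j => h (.of j), fun h x => ?_⟩
  have hext : (affineRep a v).comp α.toMonoidHom = affineRep a (v ∘ σ) :=
    FreeGroup.ext_hom _ _ fun j => by simpa using h j
  exact DFunLike.congr_fun hext x

end FreeGroup

section Braid

def IsWadaType1 (n : ℕ) (k : ℤ)
    (φ : PresentedGroup (braidRels (n - 1)) →* MulAut (FreeGroup (Fin n))) : Prop :=
  ∀ i : Fin (n - 1),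
    (φ (PresentedGroup.of i)) (FreeGroup.of (xL n i)) =
        FreeGroup.of (xL n i) ^ k * FreeGroup.of (xR n i) * FreeGroup.of (xL n i) ^ (-k) ∧
    (φ (PresentedGroup.of i)) (FreeGroup.of (xR n i)) = FreeGroup.of (xL n i) ∧
    ∀ j : Fin n, j ≠ xL n i → j ≠ xR n i →
      (φ (PresentedGroup.of i)) (FreeGroup.of j) = FreeGroup.of j

variable {n : ℕ} {R : Type*} [CommRing R]

lemma IsWadaType1.range_le_affineRepStabilizer {s : ℤ}
    {ψ : PresentedGroup (braidRels (n - 1)) →* MulAut (FreeGroup (Fin n))}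
    (hψ : IsWadaType1 n s ψ) {a : Rˣ} (ha : a ^ s = 1) :
    ψ.range ≤ affineRepStabilizer a := by
  rintro _ ⟨x, rfl⟩
  refine PresentedGroup.generated_by _ ((affineRepStabilizer a).comap ψ) (fun i => ?_) x
  obtain ⟨hL, hR, hfix⟩ := hψ i
  refine mem_affineRepStabilizer_iff.mpr ⟨swap (xL n i) (xR n i), fun v j => ?_⟩
  by_cases hjL : j = xL n i
  · subst hjL
    rw [hL, swap_apply_left, map_mul, map_mul, map_zpow, map_zpow, affineRep_of, affineRep_of,
      zpow_neg, (commute_aff_zpow_of_zpow_eq_one ha _ _).mul_inv_cancel]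
  by_cases hjR : j = xR n i
  · subst hjR
    rw [hR, swap_apply_right, affineRep_of]
  · rw [hfix j hjL hjR, swap_apply_of_ne_of_ne hjL hjR, affineRep_of]

lemma IsWadaType1.zpow_eq_one_of_mem_affineRepStabilizer [Nontrivial R] {k : ℤ}
    {φ : PresentedGroup (braidRels (n - 1)) →* MulAut (FreeGroup (Fin n))}
    (hφ : IsWadaType1 n k φ) {a : Rˣ} (i : Fin (n - 1))
    (hi : φ (PresentedGroup.of i) ∈ affineRepStabilizer a) : a ^ k = 1 := by
  obtain ⟨σ, hσ⟩ := mem_affineRepStabilizer_iff.mp hi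
  have hLR : xL n i ≠ xR n i := by simp [xL, xR, Fin.ext_iff]
  set v : Fin n → R := Pi.single (xR n i) 1
  have key := congrArg (· 0) (hσ v (xL n i))
  simp only [(hφ i).1, map_mul, map_zpow, affineRep_of, v, Pi.single_eq_same,
    Pi.single_eq_of_ne hLR, aff_zero_zpow, Perm.mul_apply, aff_apply, mul_zero, add_zero,
    zero_add, mul_one] at key
  by_cases hσL : σ (xL n i) = xR n i
  · rw [hσL, Pi.single_eq_same] at key
    exact Units.val_eq_one.mp key
  · rw [Pi.single_eq_of_ne hσL] at key
    exact absurd key (a ^ k).ne_zero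

lemma IsWadaType1.natAbs_dvd_of_range_le (hn : 2 ≤ n) {k s : ℤ} (hs : s ≠ 0)
    {φ ψ : PresentedGroup (braidRels (n - 1)) →* MulAut (FreeGroup (Fin n))}
    (hφ : IsWadaType1 n k φ) (hψ : IsWadaType1 n s ψ) (hle : φ.range ≤ ψ.range) :
    s.natAbs ∣ k.natAbs := by
  have hm : s.natAbs ≠ 0 := Int.natAbs_ne_zero.mpr hs
  have hζ := (Complex.isPrimitiveRoot_exp s.natAbs hm).isUnit_unit hm
  have hζs := (hζ.zpow_eq_one_iff_dvd s).mpr Int.natAbs_dvd_self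
  have hζk := hφ.zpow_eq_one_of_mem_affineRepStabilizer ⟨0, by omega⟩
    (hψ.range_le_affineRepStabilizer hζs (hle ⟨_, rfl⟩))
  exact Int.ofNat_dvd_left.mp ((hζ.zpow_eq_one_iff_dvd k).mp hζk)

end Braid

end Wada

/-- For `n ≥ 2` and nonzero integers `k, s` with `|k| ≠ |s|`, the images of Wada's
type (1) representations `φ_k` and `φ_s` of `B_n` are different subgroups of
`Aut(F_n)`. -/
theorem wada_type1_images_distinct (n : ℕ) (hn : 2 ≤ n) (k s : ℤ)
    (hk : k ≠ 0) (hs : s ≠ 0) (hks : k.natAbs ≠ s.natAbs)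
    (φ ψ : PresentedGroup (braidRels (n - 1)) →* MulAut (FreeGroup (Fin n)))
    (hφ : ∀ i : Fin (n - 1),
      (φ (PresentedGroup.of i)) (FreeGroup.of (xL n i)) =
          FreeGroup.of (xL n i) ^ k * FreeGroup.of (xR n i) * FreeGroup.of (xL n i) ^ (-k) ∧
      (φ (PresentedGroup.of i)) (FreeGroup.of (xR n i)) = FreeGroup.of (xL n i) ∧
      ∀ j : Fin n, j ≠ xL n i → j ≠ xR n i →
        (φ (PresentedGroup.of i)) (FreeGroup.of j) = FreeGroup.of j)
    (hψ : ∀ i : Fin (n - 1),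
      (ψ (PresentedGroup.of i)) (FreeGroup.of (xL n i)) =
          FreeGroup.of (xL n i) ^ s * FreeGroup.of (xR n i) * FreeGroup.of (xL n i) ^ (-s) ∧
      (ψ (PresentedGroup.of i)) (FreeGroup.of (xR n i)) = FreeGroup.of (xL n i) ∧
      ∀ j : Fin n, j ≠ xL n i → j ≠ xR n i →
        (ψ (PresentedGroup.of i)) (FreeGroup.of j) = FreeGroup.of j) :
    φ.range ≠ ψ.range := by
  intro heq
  exact hks (Nat.dvd_antisymm
    (Wada.IsWadaType1.natAbs_dvd_of_range_le hn hk hψ hφ heq.ge)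
    (Wada.IsWadaType1.natAbs_dvd_of_range_le hn hs hφ hψ heq.le))
end

section
/- Let n ≥ 2 and let k be a nonzero integer. Then the image φ_k(B_n) of Wada's representation of type (1) with parameter k and the image ψ(B_n) of Wada's representation of type (2) are different subgroups of Aut(F_n). -/
namespace WadaAux

variable {n : ℕ}

/-- abelianization-type map sending `x_j` to the `j`-th basis vector. -/
noncomputable def f : FreeGroup (Fin n) →* Multiplicative (Fin n → ℤ) :=
  FreeGroup.lift fun j => Multiplicative.ofAdd (Pi.single j 1)

/-- coordinate permutation as a monoid hom. -/
def cmpHom (σ : Equiv.Perm (Fin n)) :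
    Multiplicative (Fin n → ℤ) →* Multiplicative (Fin n → ℤ) where
  toFun v := Multiplicative.ofAdd (Multiplicative.toAdd v ∘ σ.symm)
  map_one' := rfl
  map_mul' _ _ := rfl

lemma cmp_single (σ : Equiv.Perm (Fin n)) (j : Fin n) :
    cmpHom σ (Multiplicative.ofAdd (Pi.single j (1:ℤ)))
      = Multiplicative.ofAdd (Pi.single (σ j) (1:ℤ)) := by
  show Multiplicative.ofAdd ((Pi.single j (1:ℤ)) ∘ σ.symm) = _
  congr 1
  funext m
  by_cases h : m = σ j
  · simp [h, Pi.single_apply]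
  · have h2 : j ≠ σ.symm m := fun he => h (by simp [he])
    simp [Pi.single_apply, h, h2]

lemma cmp_cmp (σ τ : Equiv.Perm (Fin n)) (v) :
    cmpHom σ (cmpHom τ v) = cmpHom (τ.trans σ) v := rfl

lemma cmp_one (v : Multiplicative (Fin n → ℤ)) : cmpHom 1 v = v := rfl

noncomputable def S : Subgroup (MulAut (FreeGroup (Fin n))) where
  carrier := {A | ∃ σ : Equiv.Perm (Fin n), ∀ w, f (A w) = cmpHom σ (f w)}
  one_mem' := ⟨1, fun w => (cmp_one _).symm⟩
  mul_mem' := by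
    rintro A B ⟨σ, hA⟩ ⟨τ, hB⟩
    exact ⟨τ.trans σ, fun w => by
      show f (A (B w)) = _
      rw [hA, hB, cmp_cmp]⟩
  inv_mem' := by
    rintro A ⟨σ, hA⟩
    refine ⟨σ⁻¹, fun w => ?_⟩
    have h1 : f (A (A⁻¹ w)) = cmpHom σ (f (A⁻¹ w)) := hA _
    have h2 : A (A⁻¹ w) = w := A.apply_symm_apply w
    rw [h2] at h1
    have inj : Function.Injective (cmpHom σ : Multiplicative (Fin n → ℤ) → _) := by
      intro a b hab
      have := congrArg (cmpHom σ⁻¹) hab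
      rwa [cmp_cmp, cmp_cmp, show σ.trans σ⁻¹ = 1 from by ext x; simp,
        cmp_one, cmp_one] at this
    apply inj
    rw [← h1, cmp_cmp, show σ⁻¹.trans σ = 1 from by ext x; simp, cmp_one]

lemma mem_S_of_gens (A : MulAut (FreeGroup (Fin n))) (σ : Equiv.Perm (Fin n))
    (h : ∀ j, f (A (FreeGroup.of j)) = cmpHom σ (f (FreeGroup.of j))) : A ∈ S := by
  refine ⟨σ, fun w => ?_⟩
  have : f.comp A.toMonoidHom = (cmpHom σ).comp f := FreeGroup.ext_hom _ _ h
  exact DFunLike.congr_fun this w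

end WadaAux
open WadaAux

/-- For `n ≥ 2` and a nonzero integer `k`, the image of Wada's type (1)
representation `φ_k` and the image of Wada's type (2) representation `ψ` of `B_n`
are different subgroups of `Aut(F_n)`. -/
theorem wada_type1_type2_images_distinct (n : ℕ) (hn : 2 ≤ n) (k : ℤ) (hk : k ≠ 0)
    (φ ψ : PresentedGroup (braidRels (n - 1)) →* MulAut (FreeGroup (Fin n)))
    (hφ : ∀ i : Fin (n - 1),
      (φ (PresentedGroup.of i)) (FreeGroup.of (xL n i)) =
          FreeGroup.of (xL n i) ^ k * FreeGroup.of (xR n i) * FreeGroup.of (xL n i) ^ (-k) ∧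
      (φ (PresentedGroup.of i)) (FreeGroup.of (xR n i)) = FreeGroup.of (xL n i) ∧
      ∀ j : Fin n, j ≠ xL n i → j ≠ xR n i →
        (φ (PresentedGroup.of i)) (FreeGroup.of j) = FreeGroup.of j)
    (hψ : ∀ i : Fin (n - 1),
      (ψ (PresentedGroup.of i)) (FreeGroup.of (xL n i)) =
          FreeGroup.of (xL n i) * (FreeGroup.of (xR n i))⁻¹ * FreeGroup.of (xL n i) ∧
      (ψ (PresentedGroup.of i)) (FreeGroup.of (xR n i)) = FreeGroup.of (xL n i) ∧
      ∀ j : Fin n, j ≠ xL n i → j ≠ xR n i →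
        (ψ (PresentedGroup.of i)) (FreeGroup.of j) = FreeGroup.of j) :
    φ.range ≠ ψ.range := by
  -- f of generators
  have hf : ∀ j : Fin n, f (FreeGroup.of j) = Multiplicative.ofAdd (Pi.single j (1:ℤ)) :=
    fun j => FreeGroup.lift_apply_of
  -- every generator image under φ lies in S
  have hgen : ∀ i : Fin (n - 1), φ (PresentedGroup.of i) ∈ (S : Subgroup (MulAut (FreeGroup (Fin n)))) := by
    intro i
    obtain ⟨h1, h2, h3⟩ := hφ i
    have hLR : xL n i ≠ xR n i := by
      simp only [xL, xR, Fin.mk.injEq, ne_eq]; omega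
    refine mem_S_of_gens _ (Equiv.swap (xL n i) (xR n i)) fun j => ?_
    by_cases hjL : j = xL n i
    · subst hjL
      rw [h1]
      simp only [map_mul, map_zpow, hf, cmp_single, Equiv.swap_apply_left]
      rw [zpow_neg, mul_inv_cancel_comm]
    · by_cases hjR : j = xR n i
      · subst hjR
        rw [h2]
        simp only [hf, cmp_single, Equiv.swap_apply_right]
      · rw [h3 j hjL hjR]
        simp only [hf, cmp_single, Equiv.swap_apply_of_ne_of_ne hjL hjR]
  -- φ.range ≤ S
  have hrange : φ.range ≤ S := by
    rw [MonoidHom.range_eq_map, ← PresentedGroup.closure_range_of (braidRels (n-1)),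
      MonoidHom.map_closure]
    refine Subgroup.closure_le _ |>.mpr ?_
    rintro _ ⟨_, ⟨i, rfl⟩, rfl⟩
    exact hgen i
  -- the bad element
  intro heq
  set i₀ : Fin (n - 1) := ⟨0, by omega⟩ with hi₀
  have hmem : ψ (PresentedGroup.of i₀) ∈ φ.range := by
    rw [heq]; exact ⟨PresentedGroup.of i₀, rfl⟩
  obtain ⟨σ, hσ⟩ := hrange hmem
  have := hσ (FreeGroup.of (xL n i₀))
  obtain ⟨g1, g2, g3⟩ := hψ i₀
  rw [g1, hf, cmp_single] at this
  have hval := congrFun (congrArg Multiplicative.toAdd this) (xL n i₀)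
  have hLR : xL n i₀ ≠ xR n i₀ := by
    simp only [xL, xR, Fin.mk.injEq, ne_eq]; omega
  simp only [map_mul, map_inv, hf, toAdd_mul, toAdd_inv, toAdd_ofAdd, Pi.add_apply,
    Pi.neg_apply, Pi.single_eq_same, Pi.single_eq_of_ne hLR.symm,
    Pi.single_apply] at hval
  split_ifs at hval <;> omega
end

section
/- Let n ≥ 2 and let k be a nonzero integer. Then the image φ_k(B_n) of Wada's representation of type (1) with parameter k and the image χ(B_n) of Wada's representation of type (3) are different subgroups of Aut(F_n). -/
/-! Every generator of `φ_k` sends each free generator to a conjugate of a free generator, so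
`φ_k(B_n)` preserves the exponent sum `F_n → ℤ`. But `χ(σ_1)` sends `x_1` to `x_1² x_2`, of
exponent sum `3 ≠ 1`, so `χ(σ_1) ∉ φ_k(B_n)`. -/

def MulAut.homStabilizer {G H : Type*} [Group G] [Monoid H] (f : G →* H) :
    Subgroup (MulAut G) where
  carrier := {e | ∀ g, f (e g) = f g}
  one_mem' _ := rfl
  mul_mem' he he' g := (he _).trans (he' g)
  inv_mem' {e} he g := by simpa using (he (e⁻¹ g)).symm

theorem PresentedGroup.range_le_of_forall_of_mem {α K : Type*} [Group K]
    {rels : Set (FreeGroup α)} (φ : PresentedGroup rels →* K) (S : Subgroup K)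
    (h : ∀ a, φ (PresentedGroup.of a) ∈ S) : φ.range ≤ S := by
  rintro _ ⟨x, rfl⟩
  exact PresentedGroup.generated_by rels (S.comap φ) h x

namespace FreeGroup

variable {α : Type*}

theorem mem_homStabilizer_iff {M : Type*} [Monoid M] (f : FreeGroup α →* M)
    (e : MulAut (FreeGroup α)) :
    e ∈ MulAut.homStabilizer f ↔ ∀ a, f (e (of a)) = f (of a) := by
  refine ⟨fun he a => he _, fun h g => ?_⟩
  exact DFunLike.congr_fun (ext_hom (f.comp e.toMonoidHom) f h) g

def exponentSum : FreeGroup α →* Multiplicative ℤ :=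
  lift fun _ => Multiplicative.ofAdd 1

@[simp]
theorem exponentSum_of (a : α) : exponentSum (of a) = Multiplicative.ofAdd 1 :=
  lift_apply_of

theorem mem_homStabilizer_exponentSum_of_conj (e : MulAut (FreeGroup α))
    (h : ∀ a, ∃ b g, e (of a) = g * of b * g⁻¹) :
    e ∈ MulAut.homStabilizer exponentSum := by
  rw [mem_homStabilizer_iff]
  intro a
  obtain ⟨b, g, hg⟩ := h a
  simp [hg]

end FreeGroup

theorem wada_type1_type3_images_distinct_general (n : ℕ) (hn : 2 ≤ n) (k : ℤ)
    (φ χ : PresentedGroup (braidRels (n - 1)) →* MulAut (FreeGroup (Fin n)))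
    (hφ : ∀ i : Fin (n - 1),
      (φ (PresentedGroup.of i)) (FreeGroup.of (xL n i)) =
          FreeGroup.of (xL n i) ^ k * FreeGroup.of (xR n i) * FreeGroup.of (xL n i) ^ (-k) ∧
      (φ (PresentedGroup.of i)) (FreeGroup.of (xR n i)) = FreeGroup.of (xL n i) ∧
      ∀ j : Fin n, j ≠ xL n i → j ≠ xR n i →
        (φ (PresentedGroup.of i)) (FreeGroup.of j) = FreeGroup.of j)
    (hχ : ∀ i : Fin (n - 1),
      (χ (PresentedGroup.of i)) (FreeGroup.of (xL n i)) =
          FreeGroup.of (xL n i) ^ 2 * FreeGroup.of (xR n i) ∧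
      (χ (PresentedGroup.of i)) (FreeGroup.of (xR n i)) =
          (FreeGroup.of (xR n i))⁻¹ * (FreeGroup.of (xL n i))⁻¹ * FreeGroup.of (xR n i) ∧
      ∀ j : Fin n, j ≠ xL n i → j ≠ xR n i →
        (χ (PresentedGroup.of i)) (FreeGroup.of j) = FreeGroup.of j) :
    φ.range ≠ χ.range := by
  intro hrange
  have hφ_le : φ.range ≤ MulAut.homStabilizer FreeGroup.exponentSum := by
    refine PresentedGroup.range_le_of_forall_of_mem φ _ fun i => ?_
    refine FreeGroup.mem_homStabilizer_exponentSum_of_conj _ fun j => ?_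
    obtain ⟨hL, hR, hfix⟩ := hφ i
    by_cases hjL : j = xL n i
    · exact ⟨xR n i, FreeGroup.of (xL n i) ^ k, by rw [hjL, hL, zpow_neg]⟩
    by_cases hjR : j = xR n i
    · exact ⟨xL n i, 1, by rw [hjR, hR]; group⟩
    · exact ⟨j, 1, by rw [hfix j hjL hjR]; group⟩
  let i₀ : Fin (n - 1) := ⟨0, by omega⟩
  have hχ_mem : χ (PresentedGroup.of i₀) ∈ φ.range := hrange ▸ ⟨PresentedGroup.of i₀, rfl⟩
  have hsum := hφ_le hχ_mem (FreeGroup.of (xL n i₀))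
  rw [(hχ i₀).1] at hsum
  simp only [map_mul, map_pow, FreeGroup.exponentSum_of] at hsum
  exact absurd hsum (by decide)

/-- For `n ≥ 2` and a nonzero integer `k`, the image of Wada's type (1)
representation `φ_k` and the image of Wada's type (3) representation `χ` of `B_n`
are different subgroups of `Aut(F_n)`. -/
theorem wada_type1_type3_images_distinct (n : ℕ) (hn : 2 ≤ n) (k : ℤ) (hk : k ≠ 0)
    (φ χ : PresentedGroup (braidRels (n - 1)) →* MulAut (FreeGroup (Fin n)))
    (hφ : ∀ i : Fin (n - 1),
      (φ (PresentedGroup.of i)) (FreeGroup.of (xL n i)) =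
          FreeGroup.of (xL n i) ^ k * FreeGroup.of (xR n i) * FreeGroup.of (xL n i) ^ (-k) ∧
      (φ (PresentedGroup.of i)) (FreeGroup.of (xR n i)) = FreeGroup.of (xL n i) ∧
      ∀ j : Fin n, j ≠ xL n i → j ≠ xR n i →
        (φ (PresentedGroup.of i)) (FreeGroup.of j) = FreeGroup.of j)
    (hχ : ∀ i : Fin (n - 1),
      (χ (PresentedGroup.of i)) (FreeGroup.of (xL n i)) =
          FreeGroup.of (xL n i) ^ 2 * FreeGroup.of (xR n i) ∧
      (χ (PresentedGroup.of i)) (FreeGroup.of (xR n i)) =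
          (FreeGroup.of (xR n i))⁻¹ * (FreeGroup.of (xL n i))⁻¹ * FreeGroup.of (xR n i) ∧
      ∀ j : Fin n, j ≠ xL n i → j ≠ xR n i →
        (χ (PresentedGroup.of i)) (FreeGroup.of j) = FreeGroup.of j) :
    φ.range ≠ χ.range :=
  wada_type1_type3_images_distinct_general n hn k φ χ hφ hχ
end

section
/- Let n ≥ 2. Then the image ψ(B_n) of Wada's representation of type (2) and the image χ(B_n) of Wada's representation of type (3) are different subgroups of Aut(F_n). -/
/-! Every automorphism in the image of `ψ` preserves the exponent sum `F_n → ℤ`, because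
each `ψ(σ_i)` does on the free generators (`x_i x_{i+1}⁻¹ x_i` and `x_i` have exponent
sum `1`). But `χ(σ_1)` sends `x_1` to `x_1² x_2`, of exponent sum `3`. -/

namespace MulAut

variable {G H : Type*} [Group G] [Group H]

def preserving (f : G →* H) : Subgroup (MulAut G) where
  carrier := {φ | ∀ x, f (φ x) = f x}
  one_mem' _ := rfl
  mul_mem' {a b} ha hb x := (ha (b x)).trans (hb x)
  inv_mem' {a} ha x := by simpa using (ha (a⁻¹ x)).symm

theorem mem_preserving_iff {f : G →* H} {φ : MulAut G} :
    φ ∈ preserving f ↔ ∀ x, f (φ x) = f x :=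
  Iff.rfl

end MulAut

namespace FreeGroup

variable {α : Type*}

theorem mem_preserving_of_forall_of {H : Type*} [Group H] {f : FreeGroup α →* H}
    {φ : MulAut (FreeGroup α)} (h : ∀ a, f (φ (of a)) = f (of a)) :
    φ ∈ MulAut.preserving f := by
  have hcomp : f.comp φ.toMonoidHom = f := ext_hom _ _ h
  exact fun x => DFunLike.congr_fun hcomp x

theorem mem_preserving_exponentSum_of_wadaType2 {φ : MulAut (FreeGroup α)} {a b : α}
    (ha : φ (of a) = of a * (of b)⁻¹ * of a) (hb : φ (of b) = of a)
    (hc : ∀ c, c ≠ a → c ≠ b → φ (of c) = of c) :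
    φ ∈ MulAut.preserving exponentSum := by
  refine mem_preserving_of_forall_of fun c => ?_
  by_cases hca : c = a
  · subst hca
    rw [ha]
    simp
  by_cases hcb : c = b
  · subst hcb
    rw [hb]
    simp
  rw [hc c hca hcb]

end FreeGroup

theorem PresentedGroup.range_le_of_forall_of {α G : Type*} [Group G]
    {rels : Set (FreeGroup α)} (φ : PresentedGroup rels →* G) {S : Subgroup G}
    (h : ∀ a, φ (of a) ∈ S) : φ.range ≤ S := by
  rw [MonoidHom.range_eq_map, ← closure_range_of, MonoidHom.map_closure, Subgroup.closure_le]
  rintro _ ⟨_, ⟨a, rfl⟩, rfl⟩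
  exact h a

/-- For `n ≥ 2`, the image of Wada's type (2) representation `ψ` and the image of
Wada's type (3) representation `χ` of `B_n` are different subgroups of `Aut(F_n)`. -/
theorem wada_type2_type3_images_distinct (n : ℕ) (hn : 2 ≤ n)
    (ψ χ : PresentedGroup (braidRels (n - 1)) →* MulAut (FreeGroup (Fin n)))
    (hψ : ∀ i : Fin (n - 1),
      (ψ (PresentedGroup.of i)) (FreeGroup.of (xL n i)) =
          FreeGroup.of (xL n i) * (FreeGroup.of (xR n i))⁻¹ * FreeGroup.of (xL n i) ∧
      (ψ (PresentedGroup.of i)) (FreeGroup.of (xR n i)) = FreeGroup.of (xL n i) ∧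
      ∀ j : Fin n, j ≠ xL n i → j ≠ xR n i →
        (ψ (PresentedGroup.of i)) (FreeGroup.of j) = FreeGroup.of j)
    (hχ : ∀ i : Fin (n - 1),
      (χ (PresentedGroup.of i)) (FreeGroup.of (xL n i)) =
          FreeGroup.of (xL n i) ^ 2 * FreeGroup.of (xR n i) ∧
      (χ (PresentedGroup.of i)) (FreeGroup.of (xR n i)) =
          (FreeGroup.of (xR n i))⁻¹ * (FreeGroup.of (xL n i))⁻¹ * FreeGroup.of (xR n i) ∧
      ∀ j : Fin n, j ≠ xL n i → j ≠ xR n i →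
        (χ (PresentedGroup.of i)) (FreeGroup.of j) = FreeGroup.of j) :
    ψ.range ≠ χ.range := by
  intro hrange
  have hψ_le : ψ.range ≤ MulAut.preserving FreeGroup.exponentSum :=
    PresentedGroup.range_le_of_forall_of ψ fun i =>
      FreeGroup.mem_preserving_exponentSum_of_wadaType2 (hψ i).1 (hψ i).2.1 (hψ i).2.2
  let i₀ : Fin (n - 1) := ⟨0, by omega⟩
  have hχ_mem : χ (PresentedGroup.of i₀) ∈ MulAut.preserving FreeGroup.exponentSum :=
    hψ_le (hrange ▸ ⟨PresentedGroup.of i₀, rfl⟩)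
  have hsum := MulAut.mem_preserving_iff.mp hχ_mem (FreeGroup.of (xL n i₀))
  rw [(hχ i₀).1] at hsum
  simp at hsum
end
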